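/- arXiv:1602.02073 — 12 statements merged into one kernel-verified Lean document; each statement's English description precedes it below -/
import Mathlib

section
/- Let F be a field and let M be an upper-triangular 3×3 matrix over F, written M = [[μ₀, α₀₁, α₀₂], [0, μ₁, α₁₂], [0, 0, μ₂]]. Let D = diag(β₀, β₁, β₂) with β₀, β₁, β₂ ∈ Fˣ, and set M' := D⁻¹ · M · D. Then there exists c ∈ Fˣ (namely c = β₀⁻¹β₂) such that n(M') = c · n(M) and d(M') = c · d(M), where n(X) := X₀₁X₁₂ − X₁₁X₀₂ and d(X) := −X₀₂ for an upper-triangular matrix X. In particular, the point [n(M) : d(M)] ∈ ℙ¹(F) is unchanged when M is replaced by D⁻¹MD; i.e., the Fontaine–Laffaille invariant is independent of the choice of basis as in Lemma 2.1.7. -/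
/-! Conjugation by `diag(β)` multiplies the `(i, j)` entry by `βᵢ⁻¹ βⱼ`, so every monomial of
`X₀₁X₁₂ − X₁₁X₀₂` and of `−X₀₂` picks up the same factor `β₀⁻¹ β₂`. -/

open Matrix

namespace Matrix

variable {m n K : Type*} [Fintype m] [DecidableEq m] [Fintype n] [DecidableEq n] [Field K]

theorem inv_diagonal_of_ne_zero {d : n → K} (hd : ∀ i, d i ≠ 0) :
    (diagonal d)⁻¹ = diagonal fun i => (d i)⁻¹ :=
  inv_eq_left_inv <| by simp [diagonal_mul_diagonal, hd]

theorem inv_diagonal_mul_mul_diagonal_apply {d : m → K} (hd : ∀ i, d i ≠ 0) (e : n → K)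
    (M : Matrix m n K) (i : m) (j : n) :
    ((diagonal d)⁻¹ * M * diagonal e) i j = (d i)⁻¹ * M i j * e j := by
  rw [inv_diagonal_of_ne_zero hd, mul_diagonal, diagonal_mul]

end Matrix

theorem stmt_0_general {F : Type*} [Field F]
    (β₀ β₁ β₂ : Fˣ)
    (M D M' : Matrix (Fin 3) (Fin 3) F)
    (hD : D = Matrix.diagonal ![(β₀ : F), (β₁ : F), (β₂ : F)])
    (hM' : M' = D⁻¹ * M * D) :
    ∃ c : Fˣ, (c : F) = (β₀ : F)⁻¹ * (β₂ : F) ∧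
      M' 0 1 * M' 1 2 - M' 1 1 * M' 0 2 = (c : F) * (M 0 1 * M 1 2 - M 1 1 * M 0 2) ∧
      -(M' 0 2) = (c : F) * (-(M 0 2)) := by
  have hβ : ∀ i, ![(β₀ : F), (β₁ : F), (β₂ : F)] i ≠ 0 := fun i => by fin_cases i <;> simp
  have hconj (i j : Fin 3) :
      M' i j = (![(β₀ : F), β₁, β₂] i)⁻¹ * M i j * ![(β₀ : F), β₁, β₂] j := by
    rw [hM', hD, inv_diagonal_mul_mul_diagonal_apply hβ]
  refine ⟨β₀⁻¹ * β₂, by simp, ?_, ?_⟩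
  all_goals
    simp only [hconj, Units.val_mul, Units.val_inv_eq_inv_val, cons_val]
    field_simp

/-- The Fontaine–Laffaille invariant is independent of the choice of
compatible basis: conjugating an upper-triangular matrix `M` by an invertible diagonal
matrix `D = diag(β₀, β₁, β₂)` rescales both the numerator `n(X) = X₀₁X₁₂ − X₁₁X₀₂` and the
denominator `d(X) = −X₀₂` by the same unit `c = β₀⁻¹β₂`. -/
theorem stmt_0 {F : Type*} [Field F]
    (μ₀ μ₁ μ₂ α₀₁ α₀₂ α₁₂ : F) (β₀ β₁ β₂ : Fˣ)
    (M D M' : Matrix (Fin 3) (Fin 3) F)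
    (hM : M = !![μ₀, α₀₁, α₀₂; 0, μ₁, α₁₂; 0, 0, μ₂])
    (hD : D = Matrix.diagonal ![(β₀ : F), (β₁ : F), (β₂ : F)])
    (hM' : M' = D⁻¹ * M * D) :
    ∃ c : Fˣ, (c : F) = (β₀ : F)⁻¹ * (β₂ : F) ∧
      M' 0 1 * M' 1 2 - M' 1 1 * M' 0 2 = (c : F) * (M 0 1 * M 1 2 - M 1 1 * M 0 2) ∧
      -(M' 0 2) = (c : F) * (-(M 0 2)) :=
  stmt_0_general β₀ β₁ β₂ M D M' hD hM'
end

section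
/- Let F be a field and let M = [[μ₀, α₀₁, α₀₂], [0, μ₁, α₁₂], [0, 0, μ₂]] be an invertible upper-triangular 3×3 matrix over F (so μ₀, μ₁, μ₂ ∈ Fˣ). Let J be the antidiagonal permutation matrix [[0,0,1],[0,1,0],[1,0,0]] and set N := J · (Mᵀ)⁻¹ · J. Then N is again upper triangular, with diagonal (μ₂⁻¹, μ₁⁻¹, μ₀⁻¹), and n(N) · n(M) = d(N) · d(M), where n(X) := X₀₁X₁₂ − X₁₁X₀₂ and d(X) := −X₀₂. In other words, the Fontaine–Laffaille invariant of N is the inverse in ℙ¹(F) of that of M (this is the matrix form of the identity FL(ρ̄∨) = FL(ρ̄)⁻¹). -/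
/-!
Back-substitution inverts the upper-triangular `M` explicitly, and `X ↦ J Xᵀ J` only reflects
a matrix in its antidiagonal, so `N` is upper triangular with the inverse diagonal (in reverse
order). Reading off the entries, `n(N) = -d(M) / det M` and `d(N) = -n(M) / det M`, whence the
two Fontaine–Laffaille ratios `n / d` are reciprocal.
-/

open Matrix

/-- The Fontaine–Laffaille invariant of `X` is `[flNumerator X : flDenominator X] ∈ ℙ¹`. -/
def flNumerator {R : Type*} [CommRing R] (X : Matrix (Fin 3) (Fin 3) R) : R :=
  X 0 1 * X 1 2 - X 1 1 * X 0 2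

def flDenominator {R : Type*} [CommRing R] (X : Matrix (Fin 3) (Fin 3) R) : R :=
  -X 0 2

theorem antidiag_mul_mul_antidiag {R : Type*} [NonAssocSemiring R]
    (A : Matrix (Fin 3) (Fin 3) R) :
    !![0, 0, 1; 0, 1, 0; 1, 0, 0] * A * !![0, 0, 1; 0, 1, 0; 1, 0, 0] =
      A.submatrix Fin.rev Fin.rev := by
  rw [eta_fin_three A, mul_fin_three, mul_fin_three]
  ext i j
  fin_cases i <;> fin_cases j <;> simp

section UpperTriangular

variable {F : Type*} [Field F] {a b c d e f : F}

theorem inv_of_upperTriangular (ha : a ≠ 0) (hd : d ≠ 0) (hf : f ≠ 0) :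
    !![a, b, c; 0, d, e; 0, 0, f]⁻¹ =
      !![a⁻¹, -b / (a * d), (b * e - d * c) / (a * d * f);
        0, d⁻¹, -e / (d * f);
        0, 0, f⁻¹] := by
  apply inv_eq_right_inv
  rw [mul_fin_three, one_fin_three]
  congr 1
  simp only [vecCons_inj, and_true]
  refine ⟨⟨?_, ?_, ?_⟩, ⟨?_, ?_, ?_⟩, ⟨?_, ?_, ?_⟩⟩ <;> field_simp <;> ring

theorem antidiag_conj_transpose_inv_of_upperTriangular (ha : a ≠ 0) (hd : d ≠ 0) (hf : f ≠ 0) :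
    !![0, 0, 1; 0, 1, 0; 1, 0, 0] * (!![a, b, c; 0, d, e; 0, 0, f]ᵀ)⁻¹ *
        !![0, 0, 1; 0, 1, 0; 1, 0, 0] =
      !![f⁻¹, -e / (d * f), (b * e - d * c) / (a * d * f);
        0, d⁻¹, -b / (a * d);
        0, 0, a⁻¹] := by
  rw [← transpose_nonsing_inv, inv_of_upperTriangular ha hd hf, antidiag_mul_mul_antidiag]
  ext i j
  fin_cases i <;> fin_cases j <;> rfl

theorem flNumerator_mul_flNumerator_eq (ha : a ≠ 0) (hd : d ≠ 0) (hf : f ≠ 0) :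
    flNumerator !![f⁻¹, -e / (d * f), (b * e - d * c) / (a * d * f);
        0, d⁻¹, -b / (a * d);
        0, 0, a⁻¹] * flNumerator !![a, b, c; 0, d, e; 0, 0, f] =
      flDenominator !![f⁻¹, -e / (d * f), (b * e - d * c) / (a * d * f);
        0, d⁻¹, -b / (a * d);
        0, 0, a⁻¹] * flDenominator !![a, b, c; 0, d, e; 0, 0, f] := by
  simp only [flNumerator, flDenominator, of_apply, cons_val', cons_val_zero, cons_val_one,
    cons_val_two, empty_val', cons_val_fin_one, head_cons, tail_cons]
  field_simp
  ring

end UpperTriangular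

/-- For an invertible upper-triangular `M`, the matrix
`N = J ⬝ (Mᵀ)⁻¹ ⬝ J` (with `J` the antidiagonal permutation matrix) is again upper
triangular with diagonal `(μ₂⁻¹, μ₁⁻¹, μ₀⁻¹)`, and its Fontaine–Laffaille invariant is the
inverse of that of `M`: `n(N)·n(M) = d(N)·d(M)`, where `n(X) = X₀₁X₁₂ − X₁₁X₀₂` and
`d(X) = −X₀₂`. -/
theorem stmt_1 {F : Type*} [Field F]
    (μ₀ μ₁ μ₂ α₀₁ α₀₂ α₁₂ : F)
    (hμ₀ : μ₀ ≠ 0) (hμ₁ : μ₁ ≠ 0) (hμ₂ : μ₂ ≠ 0)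
    (M J N : Matrix (Fin 3) (Fin 3) F)
    (hM : M = !![μ₀, α₀₁, α₀₂; 0, μ₁, α₁₂; 0, 0, μ₂])
    (hJ : J = !![0, 0, 1; 0, 1, 0; 1, 0, 0])
    (hN : N = J * (Mᵀ)⁻¹ * J) :
    N 1 0 = 0 ∧ N 2 0 = 0 ∧ N 2 1 = 0 ∧
    N 0 0 = μ₂⁻¹ ∧ N 1 1 = μ₁⁻¹ ∧ N 2 2 = μ₀⁻¹ ∧
    (N 0 1 * N 1 2 - N 1 1 * N 0 2) * (M 0 1 * M 1 2 - M 1 1 * M 0 2)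
      = (-(N 0 2)) * (-(M 0 2)) := by
  subst hM hJ hN
  rw [antidiag_conj_transpose_inv_of_upperTriangular hμ₀ hμ₁ hμ₂]
  exact ⟨rfl, rfl, rfl, rfl, rfl, rfl, flNumerator_mul_flNumerator_eq hμ₀ hμ₁ hμ₂⟩
end

section
/- Let p ≥ 5 be a prime, e := p − 1, F a field, and S̄ := F[u]/(u^{ep}). Let a, b be integers with b > 2, a − b > 2, and a < p − 3. Let λ, μ, ν ∈ F with λ ≠ 0 and μ ≠ 0, and let Fil ⊆ S̄³ be the S̄-submodule generated by f₀ = (u^e, μu^{e−b}, νu^{e−a}), f₁ = (0, u^e, λu^{e−(a−b)}), and f₂ = (0, 0, u^e). If ν ≠ 0 and ν ≠ λμ, then there is an isomorphism of F[u]-modules S̄³/Fil ≅ F[u]/(u^{e−a}) ⊕ F[u]/(u^{e}) ⊕ F[u]/(u^{e+a}); i.e., the elementary divisors of S̄³/Fil are (u^{e−a}, u^{e}, u^{e+a}). -/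
/-!
`S̄³/Fil` is the cokernel of the matrix whose rows are `f₀, f₁, f₂`, so it suffices to bring
that matrix to Smith normal form. The column operations `filColumnOp` (determinant `-1`) and the
row operations `filRowOp` (lower triangular with diagonal `ν, (ν - λμ)/ν, -1/(ν - λμ)`) turn it
into `diag(u^{e-a}, u^e, u^{e+a})`. As `e + a ≤ ep`, the quotient of `S̄` by `u^d` for each of
these exponents `d` is just `F[u]/(u^d)`.
-/

open Polynomial

/-- The reduced Breuil ring `F[u]/(u^N)`. -/
noncomputable abbrev PolyQuot (F : Type*) [CommRing F] (N : ℕ) : Type _ :=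
  Polynomial F ⧸ Ideal.span {(Polynomial.X : Polynomial F) ^ N}

/-- The canonical quotient map `F[u] → F[u]/(u^N)`. -/
noncomputable abbrev qmk {F : Type*} [CommRing F] {N : ℕ} : Polynomial F →+* PolyQuot F N :=
  Ideal.Quotient.mk _

open Matrix Submodule

section SmithNormalForm

variable {R n : Type*} [CommRing R] [Fintype n] [DecidableEq n]

theorem Matrix.range_vecMulLinear_mul_of_isUnit {P : Matrix n n R} (hP : IsUnit P)
    (N : Matrix n n R) :
    LinearMap.range (P * N).vecMulLinear = LinearMap.range N.vecMulLinear := by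
  have hcomp : (P * N).vecMulLinear = N.vecMulLinear ∘ₗ P.vecMulLinear :=
    LinearMap.ext fun x => (vecMul_vecMul x P N).symm
  rw [hcomp, LinearMap.range_comp_of_range_eq_top]
  exact LinearMap.range_eq_top.2 (vecMul_surjective_iff_isUnit.2 hP)

theorem Matrix.range_vecMulLinear_diagonal (d : n → R) :
    LinearMap.range (diagonal d).vecMulLinear = pi Set.univ fun i => Ideal.span {d i} := by
  ext y
  simp only [LinearMap.mem_range, vecMulLinear_apply, vecMul_diagonal, mem_pi, Set.mem_univ,
    true_implies, Ideal.mem_span_singleton', funext_iff]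
  exact (Classical.skolem (p := fun i a => a * d i = y i)).symm

noncomputable def Matrix.quotSpanRowsEquivPiOfMulEq {M P Q : Matrix n n R} {d : n → R}
    (hP : IsUnit P) (hQ : IsUnit Q) (h : M * Q = P * diagonal d) :
    ((n → R) ⧸ span R (Set.range M.row)) ≃ₗ[R] Π i, R ⧸ Ideal.span {d i} := by
  let eQ : (n → R) ≃ₗ[R] (n → R) := LinearEquiv.ofBijective Q.vecMulLinear
    ⟨vecMul_injective_of_isUnit hQ, vecMul_surjective_iff_isUnit.2 hQ⟩
  refine (Quotient.equiv _ _ eQ ?_).trans (quotientPi _)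
  have hcomp : (eQ : (n → R) →ₗ[R] n → R) ∘ₗ M.vecMulLinear = (M * Q).vecMulLinear :=
    LinearMap.ext fun x => vecMul_vecMul x M Q
  rw [← range_vecMulLinear, ← LinearMap.range_comp, hcomp, h,
    range_vecMulLinear_mul_of_isUnit hP, range_vecMulLinear_diagonal]

end SmithNormalForm

theorem Polynomial.C_mul_C_inv {F : Type*} [Field F] {x : F} (hx : x ≠ 0) :
    C x * C x⁻¹ = (1 : F[X]) := by
  rw [← C_mul, mul_inv_cancel₀ hx, C_1]

noncomputable def Ideal.quotQuotSpanSingletonEquivOfLE {R : Type*} [CommRing R] {I : Ideal R}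
    {x : R} (h : I ≤ Ideal.span {x}) :
    ((R ⧸ I) ⧸ Ideal.span {Ideal.Quotient.mk I x}) ≃ₗ[R] R ⧸ Ideal.span {x} :=
  ((Ideal.quotientEquivAlgOfEq R (by rw [Ideal.map_span, Set.image_singleton]; rfl)).trans
    (DoubleQuot.quotQuotEquivQuotOfLEₐ R h)).toLinearEquiv

def LinearEquiv.piFinThree (R : Type*) [Semiring R] (M : Fin 3 → Type*)
    [∀ i, AddCommMonoid (M i)] [∀ i, Module R (M i)] : (Π i, M i) ≃ₗ[R] M 0 × M 1 × M 2 :=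
  (Fin.consLinearEquiv R M).symm.trans
    ((LinearEquiv.refl R (M 0)).prodCongr (LinearEquiv.piFinTwo R fun i => M i.succ))

section BreuilFiltration

variable {F : Type*} [Field F] (lam mu nu : F) (e a b : ℕ)

noncomputable def filMatrix : Matrix (Fin 3) (Fin 3) F[X] :=
  !![X ^ e, C mu * X ^ (e - b), C nu * X ^ (e - a);
     0, X ^ e, C lam * X ^ (e - (a - b));
     0, 0, X ^ e]

noncomputable def filColumnOp : Matrix (Fin 3) (Fin 3) F[X] :=
  !![0, 0, 1;
     0, 1, C lam * C (nu - lam * mu)⁻¹ * X ^ b;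
     1, -(C mu * C nu⁻¹) * X ^ (a - b), -C (nu - lam * mu)⁻¹ * X ^ a]

noncomputable def filRowOp : Matrix (Fin 3) (Fin 3) F[X] :=
  !![C nu, 0, 0;
     C lam * X ^ b, (C nu - C lam * C mu) * C nu⁻¹, 0;
     X ^ a, -(C mu * C nu⁻¹) * X ^ (a - b), -C (nu - lam * mu)⁻¹]

theorem isUnit_filColumnOp : IsUnit (filColumnOp lam mu nu a b) := by
  rw [isUnit_iff_isUnit_det, det_fin_three]
  simp [filColumnOp]

theorem span_range_filMatrix_map_row (N : ℕ) :
    span (PolyQuot F N) (Set.range ((filMatrix lam mu nu e a b).map (qmk (N := N))).row) =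
      span (PolyQuot F N)
        {![qmk (X ^ e), qmk (C mu * X ^ (e - b)), qmk (C nu * X ^ (e - a))],
         ![0, qmk (X ^ e), qmk (C lam * X ^ (e - (a - b)))],
         ![0, 0, qmk (X ^ e)]} := by
  have hrows : ((filMatrix lam mu nu e a b).map (qmk (N := N))).row =
      ![![qmk (X ^ e), qmk (C mu * X ^ (e - b)), qmk (C nu * X ^ (e - a))],
        ![0, qmk (X ^ e), qmk (C lam * X ^ (e - (a - b)))],
        ![0, 0, qmk (X ^ e)]] := by
    ext i j
    fin_cases i <;> fin_cases j <;> simp [filMatrix]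
  rw [hrows, range_cons, range_cons_cons_empty, Set.singleton_union]

variable {lam mu nu}

theorem isUnit_filRowOp (hnu : nu ≠ 0) (hnlm : nu ≠ lam * mu) :
    IsUnit (filRowOp lam mu nu a b) := by
  have hi := C_mul_C_inv hnu
  have hk : (C nu - C lam * C mu) * C (nu - lam * mu)⁻¹ = (1 : F[X]) := by
    simpa only [C_sub, C_mul] using C_mul_C_inv (sub_ne_zero.2 hnlm)
  have hdet : (filRowOp lam mu nu a b).det = -1 := by
    rw [det_fin_three]
    simp only [filRowOp, of_apply, cons_val', cons_val_zero, cons_val_fin_one, cons_val_one,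
      cons_val, mul_zero, zero_mul, sub_zero, add_zero]
    linear_combination -((C nu - C lam * C mu) * C (nu - lam * mu)⁻¹) * hi - hk
  rw [isUnit_iff_isUnit_det, hdet]
  exact isUnit_one.neg

theorem filMatrix_mul_filColumnOp (hnu : nu ≠ 0) (hnlm : nu ≠ lam * mu) (hba : b ≤ a)
    (hae : a ≤ e) :
    filMatrix lam mu nu e a b * filColumnOp lam mu nu a b =
      filRowOp lam mu nu a b * diagonal (fun i => X ^ ![e - a, e, e + a] i) := by
  have hi := C_mul_C_inv hnu
  have hk : (C nu - C lam * C mu) * C (nu - lam * mu)⁻¹ = (1 : F[X]) := by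
    simpa only [C_sub, C_mul] using C_mul_C_inv (sub_ne_zero.2 hnlm)
  obtain ⟨c, rfl⟩ := Nat.exists_eq_add_of_le hba
  obtain ⟨al, rfl⟩ := Nat.exists_eq_add_of_le' hae
  simp only [filMatrix, filColumnOp, filRowOp, mul_fin_three, diagonal_fin_three]
  rw [show al + (b + c) - b = al + c by omega, show b + c - b = c by omega,
    show al + (b + c) - (b + c) = al by omega, show al + (b + c) - c = al + b by omega]
  simp only [EmbeddingLike.apply_eq_iff_eq, vecCons_inj, and_true, cons_val_zero, cons_val_one,
    cons_val_two, head_cons, tail_cons]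
  refine ⟨⟨by ring, ?_, ?_⟩, ⟨by ring, ?_, by ring⟩, by ring, by ring, by ring⟩
  · linear_combination (-(C mu * X ^ (al + c))) * hi
  · linear_combination (-X ^ (al + (b + c))) * hk
  · linear_combination (-X ^ (al + (b + c))) * hi

variable {e a b} in
noncomputable def quotSpanFilMatrixEquiv (hnu : nu ≠ 0) (hnlm : nu ≠ lam * mu) (hba : b ≤ a)
    (hae : a ≤ e) (N : ℕ) :
    ((Fin 3 → PolyQuot F N) ⧸ span (PolyQuot F N)
        (Set.range ((filMatrix lam mu nu e a b).map (qmk (N := N))).row)) ≃ₗ[PolyQuot F N]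
      Π i, PolyQuot F N ⧸ Ideal.span {(qmk (X ^ ![e - a, e, e + a] i) : PolyQuot F N)} :=
  quotSpanRowsEquivPiOfMulEq ((isUnit_filRowOp a b hnu hnlm).map (qmk.mapMatrix (m := Fin 3)))
    ((isUnit_filColumnOp lam mu nu a b).map (qmk.mapMatrix (m := Fin 3))) <| by
      simp only [RingHom.mapMatrix_apply]
      rw [← Matrix.map_mul, filMatrix_mul_filColumnOp e a b hnu hnlm hba hae, Matrix.map_mul,
        diagonal_map (map_zero _)]

end BreuilFiltration

theorem stmt_2_general {F : Type*} [Field F] (p : ℕ)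
    (e : ℕ) (he : e = p - 1)
    (a b : ℕ) (hab : 2 < a - b) (ha : a < p - 3)
    (lam mu nu : F)
    (hnu : nu ≠ 0) (hnlm : nu ≠ lam * mu)
    (Fil : Submodule (PolyQuot F (e * p)) (Fin 3 → PolyQuot F (e * p)))
    (hFil : Fil = Submodule.span (PolyQuot F (e * p))
      {![qmk (X ^ e), qmk (C mu * X ^ (e - b)), qmk (C nu * X ^ (e - a))],
       ![0, qmk (X ^ e), qmk (C lam * X ^ (e - (a - b)))],
       ![0, 0, qmk (X ^ e)]}) :
    Nonempty (((Fin 3 → PolyQuot F (e * p)) ⧸ Fil.restrictScalars (Polynomial F))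
        ≃ₗ[Polynomial F]
      (PolyQuot F (e - a) × PolyQuot F e × PolyQuot F (e + a))) := by
  have hba : b ≤ a := by omega
  have hae : a ≤ e := by omega
  have hdiv : ∀ i, ![e - a, e, e + a] i ≤ e * p := by
    have : e + a ≤ e * p := calc
      e + a ≤ e * 2 := by omega
      _ ≤ e * p := Nat.mul_le_mul_left e (by omega)
    intro i
    fin_cases i <;> simp only [Fin.zero_eta, Fin.mk_one, Fin.reduceFinMk, cons_val_zero,
      cons_val_one, cons_val] <;> omega
  rw [← span_range_filMatrix_map_row] at hFil
  subst hFil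
  exact ⟨(Submodule.Quotient.restrictScalarsEquiv F[X] _).trans <|
    ((quotSpanFilMatrixEquiv hnu hnlm hba hae (e * p)).restrictScalars F[X]).trans <|
    (LinearEquiv.piCongrRight fun i => Ideal.quotQuotSpanSingletonEquivOfLE
      (Ideal.span_singleton_le_span_singleton.2 (pow_dvd_pow X (hdiv i)))).trans <|
    LinearEquiv.piFinThree F[X] _⟩

/-- Elementary divisors of `S̄³/Fil` in the case `ν ≠ 0`, `ν ≠ λμ`:
they are `(u^{e−a}, u^{e}, u^{e+a})`. -/
theorem stmt_2 {F : Type*} [Field F] (p : ℕ) (hp : p.Prime) (hp5 : 5 ≤ p)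
    (e : ℕ) (he : e = p - 1)
    (a b : ℕ) (hb : 2 < b) (hab : 2 < a - b) (ha : a < p - 3)
    (lam mu nu : F) (hlam : lam ≠ 0) (hmu : mu ≠ 0)
    (hnu : nu ≠ 0) (hnlm : nu ≠ lam * mu)
    (Fil : Submodule (PolyQuot F (e * p)) (Fin 3 → PolyQuot F (e * p)))
    (hFil : Fil = Submodule.span (PolyQuot F (e * p))
      {![qmk (X ^ e), qmk (C mu * X ^ (e - b)), qmk (C nu * X ^ (e - a))],
       ![0, qmk (X ^ e), qmk (C lam * X ^ (e - (a - b)))],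
       ![0, 0, qmk (X ^ e)]}) :
    Nonempty (((Fin 3 → PolyQuot F (e * p)) ⧸ Fil.restrictScalars (Polynomial F))
        ≃ₗ[Polynomial F]
      (PolyQuot F (e - a) × PolyQuot F e × PolyQuot F (e + a))) :=
  stmt_2_general p e he a b hab ha lam mu nu hnu hnlm Fil hFil
end

section
/- Let p ≥ 5 be a prime, e := p − 1, F a field, and S̄ := F[u]/(u^{ep}). Let a, b be integers with b > 2, a − b > 2, and a < p − 3. Let λ, μ, ν ∈ F with λ ≠ 0 and μ ≠ 0, and let Fil ⊆ S̄³ be the S̄-submodule generated by f₀ = (u^e, μu^{e−b}, νu^{e−a}), f₁ = (0, u^e, λu^{e−(a−b)}), and f₂ = (0, 0, u^e). If ν = λμ, then there is an isomorphism of F[u]-modules S̄³/Fil ≅ F[u]/(u^{e−a}) ⊕ F[u]/(u^{e+(a−b)}) ⊕ F[u]/(u^{e+b}); i.e., the elementary divisors of S̄³/Fil are (u^{e−a}, u^{e+(a−b)}, u^{e+b}). -/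
open Polynomial

noncomputable def LinearMap.quotEquivOfComapEqKer {R M N P : Type*} [Ring R]
    [AddCommGroup M] [Module R M] [AddCommGroup N] [Module R N] [AddCommGroup P] [Module R P]
    {π : M →ₗ[R] N} (hπ : Function.Surjective π)
    {Ψ : M →ₗ[R] P} (hΨ : Function.Surjective Ψ)
    {L : Submodule R N} (h : L.comap π = LinearMap.ker Ψ) : (N ⧸ L) ≃ₗ[R] P :=
  ((L.mkQ ∘ₗ π).quotKerEquivOfSurjective (L.mkQ_surjective.comp hπ)).symm ≪≫ₗ
    Submodule.quotEquivOfEq _ _ (by rw [LinearMap.ker_comp, Submodule.ker_mkQ, h]) ≪≫ₗ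
    Ψ.quotKerEquivOfSurjective hΨ

namespace Ideal

variable {R : Type*} [CommRing R] (I : Ideal R) (ι : Type*)

noncomputable abbrev piReduction : (ι → R) →ₗ[R] (ι → R ⧸ I) :=
  (Quotient.mkₐ R I).toLinearMap.compLeft ι

lemma piReduction_surjective : Function.Surjective (I.piReduction ι) := fun y =>
  ⟨fun i => (Quotient.mk_surjective (y i)).choose,
    funext fun i => (Quotient.mk_surjective (y i)).choose_spec⟩

variable {I ι} in
lemma mem_ker_piReduction {x : ι → R} :
    x ∈ LinearMap.ker (I.piReduction ι) ↔ ∀ i, x i ∈ I := by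
  simp only [LinearMap.mem_ker, funext_iff, LinearMap.compLeft_apply, Function.comp_apply,
    AlgHom.toLinearMap_apply, Quotient.mkₐ_eq_mk, Pi.zero_apply, Quotient.eq_zero_iff_mem]

lemma piReduction_vecCons {n : ℕ} (x : R) (v : Fin n → R) :
    I.piReduction (Fin (n + 1)) (Matrix.vecCons x v) =
      Matrix.vecCons (Quotient.mk I x) (I.piReduction (Fin n) v) := by
  funext i
  cases i using Fin.cases <;> rfl

lemma piReduction_vecEmpty : I.piReduction (Fin 0) ![] = ![] :=
  Subsingleton.elim _ _

lemma restrictScalars_span_image_piReduction (s : Set (ι → R)) :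
    (Submodule.span (R ⧸ I) (I.piReduction ι '' s)).restrictScalars R =
      (Submodule.span R s).map (I.piReduction ι) := by
  rw [Submodule.restrictScalars_span R (R ⧸ I) Quotient.mk_surjective, Submodule.map_span]

end Ideal

section FilLattice

variable {R : Type*} [CommRing R] (t : R) (lam mu : Rˣ) (m b d : ℕ)

/-- With `e = m + b + d` and `a = b + d`, these are the lifts to `R³` of the generators of `Fil`
when `ν = λμ`. -/
def filLattice : Submodule R (Fin 3 → R) :=
  Submodule.span R {![t ^ (m + b + d), mu * t ^ (m + d), lam * mu * t ^ m],
    ![0, t ^ (m + b + d), lam * t ^ (m + b)], ![0, 0, t ^ (m + b + d)]}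

noncomputable def diagCoord : (Fin 3 → R) →ₗ[R] (R ⧸ Ideal.span {t ^ m}) ×
    (R ⧸ Ideal.span {t ^ (m + b + d + d)}) × (R ⧸ Ideal.span {t ^ (m + b + d + b)}) :=
  ((Ideal.Quotient.mkₐ R _).toLinearMap ∘ₗ LinearMap.proj 2).prod
    (((Ideal.Quotient.mkₐ R _).toLinearMap ∘ₗ
        (LinearMap.proj 1 - ((lam⁻¹ : Rˣ) * t ^ d : R) • LinearMap.proj 2)).prod
      ((Ideal.Quotient.mkₐ R _).toLinearMap ∘ₗ
        (LinearMap.proj 0 -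
          ((lam⁻¹ : Rˣ) * (mu⁻¹ : Rˣ) * t ^ (b + d) : R) • LinearMap.proj 2)))

lemma diagCoord_apply (x : Fin 3 → R) : diagCoord t lam mu m b d x =
    (Ideal.Quotient.mk _ (x 2), Ideal.Quotient.mk _ (x 1 - (lam⁻¹ : Rˣ) * t ^ d * x 2),
      Ideal.Quotient.mk _ (x 0 - (lam⁻¹ : Rˣ) * (mu⁻¹ : Rˣ) * t ^ (b + d) * x 2)) := by
  simp [diagCoord, mul_assoc]

lemma mem_ker_diagCoord {x : Fin 3 → R} : x ∈ LinearMap.ker (diagCoord t lam mu m b d) ↔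
    t ^ m ∣ x 2 ∧ t ^ (m + b + d + d) ∣ x 1 - (lam⁻¹ : Rˣ) * t ^ d * x 2 ∧
      t ^ (m + b + d + b) ∣ x 0 - (lam⁻¹ : Rˣ) * (mu⁻¹ : Rˣ) * t ^ (b + d) * x 2 := by
  simp only [LinearMap.mem_ker, diagCoord_apply, Prod.mk_eq_zero, Ideal.Quotient.eq_zero_iff_dvd]

lemma diagCoord_surjective : Function.Surjective (diagCoord t lam mu m b d) := by
  rintro ⟨y₀, y₁, y₂⟩
  obtain ⟨g₀, rfl⟩ := Ideal.Quotient.mk_surjective y₀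
  obtain ⟨g₁, rfl⟩ := Ideal.Quotient.mk_surjective y₁
  obtain ⟨g₂, rfl⟩ := Ideal.Quotient.mk_surjective y₂
  refine ⟨![g₂ + (lam⁻¹ : Rˣ) * (mu⁻¹ : Rˣ) * t ^ (b + d) * g₀,
    g₁ + (lam⁻¹ : Rˣ) * t ^ d * g₀, g₀], ?_⟩
  simp only [diagCoord_apply, Matrix.cons_val, add_sub_cancel_right]

lemma filLattice_le_ker_diagCoord :
    filLattice t lam mu m b d ≤ LinearMap.ker (diagCoord t lam mu m b d) := by
  have hl := lam.inv_mul
  have hm := mu.inv_mul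
  rw [filLattice, Submodule.span_le]
  rintro x (rfl | rfl | rfl) <;>
    simp only [SetLike.mem_coe, mem_ker_diagCoord, Matrix.cons_val]
  · refine ⟨⟨lam * mu, by ring⟩, ⟨0, ?_⟩, ⟨0, ?_⟩⟩
    · linear_combination (-(mu * t ^ (m + d) : R)) * hl
    · linear_combination
        (-(t ^ (m + b + d) * (mu⁻¹ : Rˣ) * mu : R)) * hl - t ^ (m + b + d) * hm
  · exact ⟨⟨lam * t ^ b, by ring⟩, ⟨0, by linear_combination (-t ^ (m + b + d)) * hl⟩,
      ⟨-((lam⁻¹ : Rˣ) * (mu⁻¹ : Rˣ) * lam), by ring⟩⟩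
  · exact ⟨⟨t ^ (b + d), by ring⟩, ⟨-(lam⁻¹ : Rˣ), by ring⟩,
      ⟨-((lam⁻¹ : Rˣ) * (mu⁻¹ : Rˣ) * t ^ d), by ring⟩⟩

lemma ker_diagCoord_le_filLattice :
    LinearMap.ker (diagCoord t lam mu m b d) ≤ filLattice t lam mu m b d := by
  have hl := lam.inv_mul
  have hm := mu.inv_mul
  intro x hx
  obtain ⟨⟨g, hg⟩, ⟨h, hh⟩, ⟨k, hk⟩⟩ := (mem_ker_diagCoord t lam mu m b d).mp hx
  have hx_eq : x = (t ^ b * k + (lam⁻¹ : Rˣ) * (mu⁻¹ : Rˣ) * g) •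
        ![t ^ (m + b + d), mu * t ^ (m + d), lam * mu * t ^ m] +
      (t ^ d * h - mu * k) • ![0, t ^ (m + b + d), lam * t ^ (m + b)] +
      (-(lam * h)) • ![0, 0, t ^ (m + b + d)] := by
    funext i
    fin_cases i <;>
      simp only [Fin.zero_eta, Fin.mk_one, Fin.reduceFinMk, Pi.add_apply, Pi.smul_apply,
        smul_eq_mul, Matrix.cons_val]
    · linear_combination hk + (lam⁻¹ : Rˣ) * (mu⁻¹ : Rˣ) * t ^ (b + d) * hg
    · linear_combination
        hh + (lam⁻¹ : Rˣ) * t ^ d * hg - ((lam⁻¹ : Rˣ) * g * t ^ (m + d)) * hm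
    · linear_combination hg - (g * t ^ m * (mu⁻¹ : Rˣ) * mu) * hl - g * t ^ m * hm
  rw [hx_eq, filLattice]
  refine add_mem (add_mem (Submodule.smul_mem _ _ ?_) (Submodule.smul_mem _ _ ?_))
    (Submodule.smul_mem _ _ ?_) <;> exact Submodule.subset_span (by simp)

lemma ker_diagCoord_eq_filLattice :
    LinearMap.ker (diagCoord t lam mu m b d) = filLattice t lam mu m b d :=
  le_antisymm (ker_diagCoord_le_filLattice t lam mu m b d)
    (filLattice_le_ker_diagCoord t lam mu m b d)

lemma ker_piReduction_le_filLattice {N : ℕ} (hb : m + b + d + b ≤ N)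
    (hd : m + b + d + d ≤ N) :
    LinearMap.ker ((Ideal.span {t ^ N}).piReduction (Fin 3)) ≤ filLattice t lam mu m b d := by
  intro x hx
  have hdvd : ∀ n ≤ N, ∀ i, t ^ n ∣ x i := fun n hn i =>
    (pow_dvd_pow t hn).trans (Ideal.mem_span_singleton.mp (Ideal.mem_ker_piReduction.mp hx i))
  rw [← ker_diagCoord_eq_filLattice, mem_ker_diagCoord]
  exact ⟨hdvd m (by omega) 2, dvd_sub (hdvd _ hd 1) ((hdvd _ hd 2).mul_left _),
    dvd_sub (hdvd _ hb 0) ((hdvd _ hb 2).mul_left _)⟩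

end FilLattice

theorem stmt_3_general {F : Type*} [Field F] (p : ℕ) (hp5 : 5 ≤ p)
    (e : ℕ) (he : e = p - 1)
    (a b : ℕ) (hab : 2 < a - b) (ha : a < p - 3)
    (lam mu nu : F) (hlam : lam ≠ 0) (hmu : mu ≠ 0)
    (hnu : nu = lam * mu)
    (Fil : Submodule (PolyQuot F (e * p)) (Fin 3 → PolyQuot F (e * p)))
    (hFil : Fil = Submodule.span (PolyQuot F (e * p))
      {![qmk (X ^ e), qmk (C mu * X ^ (e - b)), qmk (C nu * X ^ (e - a))],
       ![0, qmk (X ^ e), qmk (C lam * X ^ (e - (a - b)))],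
       ![0, 0, qmk (X ^ e)]}) :
    Nonempty (((Fin 3 → PolyQuot F (e * p)) ⧸ Fil.restrictScalars (Polynomial F))
        ≃ₗ[Polynomial F]
      (PolyQuot F (e - a) × PolyQuot F (e + (a - b)) × PolyQuot F (e + b))) := by
  obtain ⟨d, rfl⟩ : ∃ d, a = b + d := ⟨a - b, by omega⟩
  obtain ⟨m, rfl⟩ : ∃ m, e = m + b + d := ⟨e - (b + d), by omega⟩
  rw [show b + d - b = d by omega, show m + b + d - (b + d) = m by omega] at hFil ⊢
  rw [show m + b + d - b = m + d by omega, show m + b + d - d = m + b by omega] at hFil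
  have hN : m + b + d + b ≤ (m + b + d) * p ∧ m + b + d + d ≤ (m + b + d) * p := by
    constructor <;> nlinarith
  let lam' : F[X]ˣ := (isUnit_C.mpr hlam.isUnit).unit
  let mu' : F[X]ˣ := (isUnit_C.mpr hmu.isUnit).unit
  have hFil' : Fil.restrictScalars F[X] = (filLattice X lam' mu' m b d).map
      ((Ideal.span {(X : F[X]) ^ ((m + b + d) * p)}).piReduction (Fin 3)) := by
    rw [hFil, filLattice, ← Ideal.restrictScalars_span_image_piReduction]
    simp only [Set.image_insert_eq, Set.image_singleton, Ideal.piReduction_vecCons,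
      Ideal.piReduction_vecEmpty, map_zero, hnu, C_mul, lam', mu', IsUnit.unit_spec]
  refine ⟨LinearMap.quotEquivOfComapEqKer
    ((Ideal.span {(X : F[X]) ^ ((m + b + d) * p)}).piReduction_surjective (Fin 3))
    (diagCoord_surjective X lam' mu' m b d) ?_⟩
  rw [hFil', Submodule.comap_map_eq_self
    (ker_piReduction_le_filLattice X lam' mu' m b d hN.1 hN.2), ker_diagCoord_eq_filLattice]

/-- Elementary divisors of `S̄³/Fil` in the case `ν = λμ`:
they are `(u^{e−a}, u^{e+(a−b)}, u^{e+b})`. -/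
theorem stmt_3 {F : Type*} [Field F] (p : ℕ) (hp : p.Prime) (hp5 : 5 ≤ p)
    (e : ℕ) (he : e = p - 1)
    (a b : ℕ) (hb : 2 < b) (hab : 2 < a - b) (ha : a < p - 3)
    (lam mu nu : F) (hlam : lam ≠ 0) (hmu : mu ≠ 0)
    (hnu : nu = lam * mu)
    (Fil : Submodule (PolyQuot F (e * p)) (Fin 3 → PolyQuot F (e * p)))
    (hFil : Fil = Submodule.span (PolyQuot F (e * p))
      {![qmk (X ^ e), qmk (C mu * X ^ (e - b)), qmk (C nu * X ^ (e - a))],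
       ![0, qmk (X ^ e), qmk (C lam * X ^ (e - (a - b)))],
       ![0, 0, qmk (X ^ e)]}) :
    Nonempty (((Fin 3 → PolyQuot F (e * p)) ⧸ Fil.restrictScalars (Polynomial F))
        ≃ₗ[Polynomial F]
      (PolyQuot F (e - a) × PolyQuot F (e + (a - b)) × PolyQuot F (e + b))) :=
  stmt_3_general p hp5 e he a b hab ha lam mu nu hlam hmu hnu Fil hFil
end

section
/- Let p ≥ 3 be a prime, F a field, e ≥ 1 an integer, and R := F[u]/(u^{ep}). Let d be an integer with 0 < d < e and let x ∈ F. If the element (0, u^{2e}) of R² lies in the R-submodule of R² generated by (u^{e}, 0) and (x·u^{d}, u^{2e}), then x = 0. -/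
/-!
Write `(0, u^m) = a (u^n, 0) + b (x u^d, u^m)` in `F[u]/(u^N)` with `m < N`. The second
coordinate gives `b u^m = u^m`, so `b` has constant term `1`; the coefficient of `u^d` in the
first coordinate, `d < n`, is then `x · b(0) = x`, and it must vanish.
-/

open Polynomial

section
variable {F : Type*} [CommRing F] {N : ℕ}

theorem qmk_eq_zero_iff_coeff_eq_zero (f : F[X]) :
    (qmk f : PolyQuot F N) = 0 ↔ ∀ k < N, f.coeff k = 0 := by
  rw [Ideal.Quotient.eq_zero_iff_mem, Ideal.mem_span_singleton, X_pow_dvd_iff]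

theorem coeff_zero_eq_one_of_qmk_mul_X_pow {m : ℕ} (hm : m < N) {B : F[X]}
    (hB : (qmk (B * X ^ m) : PolyQuot F N) = qmk (X ^ m)) : B.coeff 0 = 1 := by
  rw [← sub_eq_zero, ← map_sub, ← sub_one_mul, qmk_eq_zero_iff_coeff_eq_zero] at hB
  simpa [coeff_mul_X_pow', sub_eq_zero] using hB m hm

theorem eq_zero_of_pair_mem_span_pair {m n d : ℕ} (hm : m < N) (hdn : d < n) (hdN : d < N)
    (x : F)
    (h : (![0, qmk (X ^ m)] : Fin 2 → PolyQuot F N) ∈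
      Submodule.span (PolyQuot F N) {![qmk (X ^ n), 0], ![qmk (C x * X ^ d), qmk (X ^ m)]}) :
    x = 0 := by
  obtain ⟨a, b, hab⟩ := Submodule.mem_span_pair.mp h
  obtain ⟨A, rfl⟩ := Ideal.Quotient.mk_surjective a
  obtain ⟨B, rfl⟩ := Ideal.Quotient.mk_surjective b
  have hfst : (qmk (A * X ^ n + C x * B * X ^ d) : PolyQuot F N) = 0 := by
    have := congrFun hab 0
    simp only [Matrix.cons_val_zero, Pi.add_apply, Pi.smul_apply, smul_eq_mul] at this
    rw [← this]
    simp only [map_add, map_mul]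
    ring
  have hsnd : (qmk (B * X ^ m) : PolyQuot F N) = qmk (X ^ m) := by
    simpa using congrFun hab 1
  have hB0 := coeff_zero_eq_one_of_qmk_mul_X_pow hm hsnd
  have hcoeff := (qmk_eq_zero_iff_coeff_eq_zero _).mp hfst d hdN
  simpa [coeff_mul_X_pow', hdn.not_ge, hB0] using hcoeff
end

theorem stmt_5_general {F : Type*} [Field F] (p : ℕ) (hp3 : 3 ≤ p)
    (e : ℕ) (d : ℕ) (hde : d < e) (x : F)
    (h : (![0, qmk (X ^ (2 * e))] : Fin 2 → PolyQuot F (e * p)) ∈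
      Submodule.span (PolyQuot F (e * p))
        {![qmk (X ^ e), 0], ![qmk (C x * X ^ d), qmk (X ^ (2 * e))]}) :
    x = 0 := by
  have h2e : 2 * e < e * p := by nlinarith
  exact eq_zero_of_pair_mem_span_pair h2e hde (by nlinarith) x h

/-- In `R = F[u]/(u^{ep})`, if `(0, u^{2e})` lies in the `R`-submodule of
`R²` generated by `(u^{e}, 0)` and `(x·u^{d}, u^{2e})` with `0 < d < e`, then `x = 0`. -/
theorem stmt_5 {F : Type*} [Field F] (p : ℕ) (hp : p.Prime) (hp3 : 3 ≤ p)
    (e : ℕ) (he : 1 ≤ e) (d : ℕ) (hd0 : 0 < d) (hde : d < e) (x : F)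
    (h : (![0, qmk (X ^ (2 * e))] : Fin 2 → PolyQuot F (e * p)) ∈
      Submodule.span (PolyQuot F (e * p))
        {![qmk (X ^ e), 0], ![qmk (C x * X ^ d), qmk (X ^ (2 * e))]}) :
    x = 0 :=
  stmt_5_general p hp3 e d hde x h
end

section
/- Let F be a field, and let e, N, m, n be integers with e ≥ 1, N > 2e, m ≥ 0, and e + m < n ≤ N. Set R := F[u]/(u^{N}) and let c ∈ F. If the element (u^{2e}, 0) of R² lies in the R-submodule of R² generated by (u^{e}, c·u^{m}) and (0, u^{n}), then c = 0. -/
open Polynomial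

/-! Write the combination as `a • (u^e, c u^m) + b • (0, u^n)` and lift `a`, `b` to polynomials.
The first coordinate gives `a u^e ≡ u^{2e}`, so, as `2e < N`, `a` has coefficient `1` at `u^e`.
The coefficient of `u^{e+m}` in the second coordinate `a c u^m + b u^n` is then `c` (as `e + m < n`),
and it vanishes because `e + m < N`. -/

theorem coeff_eq_of_qmk_eq {F : Type*} [CommRing F] {N k : ℕ} {p q : F[X]}
    (h : (qmk p : PolyQuot F N) = qmk q) (hk : k < N) : p.coeff k = q.coeff k := by
  rw [Ideal.Quotient.eq, Ideal.mem_span_singleton, X_pow_dvd_iff] at h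
  exact sub_eq_zero.mp (by simpa using h k hk)

theorem stmt_6_general {F : Type*} [Field F] (e N m n : ℕ) (hN : 2 * e < N)
    (hmn : e + m < n) (hnN : n ≤ N) (c : F)
    (h : (![qmk (X ^ (2 * e)), 0] : Fin 2 → PolyQuot F N) ∈
      Submodule.span (PolyQuot F N)
        {![qmk (X ^ e), qmk (C c * X ^ m)], ![0, qmk (X ^ n)]}) :
    c = 0 := by
  obtain ⟨a, b, hab⟩ := Submodule.mem_span_pair.mp h
  obtain ⟨A, rfl⟩ := Ideal.Quotient.mk_surjective a
  obtain ⟨B, rfl⟩ := Ideal.Quotient.mk_surjective b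
  have hfst : (qmk (A * X ^ e) : PolyQuot F N) = qmk (X ^ (2 * e)) := by
    simpa using congrFun hab 0
  have hsnd : (qmk (A * (C c * X ^ m) + B * X ^ n) : PolyQuot F N) = qmk 0 := by
    simpa using congrFun hab 1
  have hA : A.coeff e = 1 := by
    simpa [two_mul] using coeff_eq_of_qmk_eq hfst hN
  have hc := coeff_eq_of_qmk_eq hsnd (k := e + m) (by omega)
  rw [coeff_add, ← mul_assoc, coeff_mul_X_pow, coeff_mul_C, hA, coeff_mul_X_pow',
    if_neg (by omega)] at hc
  simpa using hc

/-- In `R = F[u]/(u^N)` with `N > 2e`, `m ≥ 0` and `e + m < n ≤ N`, if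
`(u^{2e}, 0)` lies in the `R`-submodule of `R²` generated by `(u^{e}, c·u^{m})` and
`(0, u^{n})`, then `c = 0`. -/
theorem stmt_6 {F : Type*} [Field F] (e N m n : ℕ) (he : 1 ≤ e) (hN : 2 * e < N)
    (hm : 0 ≤ m) (hmn : e + m < n) (hnN : n ≤ N) (c : F)
    (h : (![qmk (X ^ (2 * e)), 0] : Fin 2 → PolyQuot F N) ∈
      Submodule.span (PolyQuot F N)
        {![qmk (X ^ e), qmk (C c * X ^ m)], ![0, qmk (X ^ n)]}) :
    c = 0 :=
  stmt_6_general e N m n hN hmn hnN c h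
end

section
/- Let p be a prime, F a field, e ≥ 1 and 0 ≤ r ≤ p − 2 integers. Set S̄ := F[u]/(u^{ep}) and let φ : S̄ → S̄ be the F-algebra endomorphism with φ(u) = u^{p}. Let M := S̄ⁿ with standard basis (e₁, …, eₙ), let V ∈ Mₙ(S̄), let Fil ⊆ M be the S̄-span of the columns f_j := Σ_i V_{ij} e_i of V, and assume u^{er}M ⊆ Fil. Let φ_r : Fil → M be an additive map satisfying φ_r(s·x) = φ(s)·φ_r(x) for all s ∈ S̄, x ∈ Fil, and suppose A ∈ GLₙ(S̄) satisfies φ_r(f_j) = Σ_i A_{ij} e_i for all j. Suppose V′ ∈ Mₙ(S̄) and B ∈ GLₙ(S̄) satisfy A·V′ ≡ V·B (mod u^{e(r+1)} Mₙ(S̄)). Then: (i) the columns e′_j := Σ_i A_{ij} e_i of A form an S̄-basis of M; (ii) the columns f′_j := Σ_i (A V′)_{ij} e_i of A·V′ lie in Fil and generate Fil as an S̄-module; and (iii) φ_r(f′_j) = Σ_i φ(B)_{ij} e′_i for all j, where φ(B) is obtained by applying φ to each entry of B. -/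
/-!
Write `t = u^e`, so that `u^{e(r+1)} = t · u^{er}`, `t` is nilpotent and `φ(t) = u^{ep} = 0`.
The columns of `A V'` differ from those of `V B` by `t`-multiples of elements `u^{er} x ∈ Fil`.
As `B` is invertible, the columns of `V B` span `Fil`, so Nakayama's lemma for the nilpotent
ideal `(t)` shows that the columns of `A V'` span `Fil` too. Applying `φ_r`, those `t`-multiples
die because `φ(t) = 0`, and semilinearity turns `φ_r` of the columns of `V B` into
`Σᵢ φ(B_{ij}) A_i`.
-/

open Polynomial

set_option synthInstance.maxHeartbeats 400000
set_option maxHeartbeats 800000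

namespace Matrix

variable {R : Type*} [CommRing R] {l m n : Type*}

theorem col_mul_eq_sum [Fintype m] (M : Matrix l m R) (N : Matrix m n R) (j : n) :
    (M * N).col j = ∑ k, N k j • M.col k := by
  ext i
  simp [Matrix.mul_apply, Finset.sum_apply, mul_comm]

theorem span_range_col_mul_le [Fintype m] (M : Matrix l m R) (N : Matrix m n R) :
    Submodule.span R (Set.range (M * N).col) ≤ Submodule.span R (Set.range M.col) := by
  refine Submodule.span_le.2 ?_
  rintro _ ⟨j, rfl⟩
  rw [col_mul_eq_sum]
  exact Submodule.sum_mem _ fun k _ => Submodule.smul_mem _ _ (Submodule.subset_span ⟨k, rfl⟩)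

theorem span_range_col_mul_of_isUnit [Fintype n] [DecidableEq n] (M : Matrix l n R)
    {N : Matrix n n R} (hN : IsUnit N) :
    Submodule.span R (Set.range (M * N).col) = Submodule.span R (Set.range M.col) := by
  refine (span_range_col_mul_le M N).antisymm ?_
  simpa [mul_nonsing_inv_cancel_right N M ((isUnit_iff_isUnit_det N).1 hN)]
    using span_range_col_mul_le (M * N) N⁻¹

theorem exists_basis_col_of_isUnit [Fintype n] [DecidableEq n] {A : Matrix n n R}
    (hA : IsUnit A) :
    ∃ b : Module.Basis n R (n → R), ∀ j, b j = A.col j := by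
  obtain ⟨iA⟩ := hA.nonempty_invertible
  refine ⟨(Pi.basisFun R n).map (A.toLinearEquiv' iA), fun j => ?_⟩
  simp [Matrix.toLinearEquiv']

end Matrix

theorem Submodule.span_range_eq_of_sub_mem_smul {R M ι : Type*} [CommRing R] [AddCommGroup M]
    [Module R M] [Finite ι] {t : R} (ht : IsNilpotent t) {v w : ι → M}
    (hvw : ∀ j, w j - v j ∈ Ideal.span {t} • span R (Set.range v)) :
    span R (Set.range w) = span R (Set.range v) := by
  refine le_antisymm (span_le.2 ?_) ?_
  · rintro _ ⟨j, rfl⟩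
    simpa using add_mem (subset_span (s := Set.range v) ⟨j, rfl⟩) (smul_le_right (hvw j))
  · have ht_jac : Ideal.span {t} ≤ Ideal.jacobson ⊥ :=
      (Ideal.span_singleton_le_iff_mem _).2 <|
        Ideal.radical_le_jacobson (mem_nilradical.2 ht)
    refine le_of_le_smul_of_le_jacobson_bot (fg_span (Set.finite_range v)) ht_jac (span_le.2 ?_)
    rintro _ ⟨j, rfl⟩
    simpa using
      sub_mem (mem_sup_left (subset_span (s := Set.range w) ⟨j, rfl⟩)) (mem_sup_right (hvw j))

theorem AddMonoidHom.map_col_mul_eq_sum {R N : Type*} [CommRing R] [AddCommGroup N] [Module R N]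
    {m n o : Type*} [Fintype n] {σ : R → R} {P : Submodule R (m → R)} (f : P →+ N)
    (hf : ∀ (s : R) (x : P), f (s • x) = σ s • f x) {V : Matrix m n R}
    (hV : ∀ k, V.col k ∈ P) {a : n → N} (hfV : ∀ k (hk : V.col k ∈ P), f ⟨V.col k, hk⟩ = a k)
    (B : Matrix n o R) (j : o) (hj : (V * B).col j ∈ P) :
    f ⟨(V * B).col j, hj⟩ = ∑ k, σ (B k j) • a k := by
  have : (⟨(V * B).col j, hj⟩ : P) = ∑ k, B k j • ⟨V.col k, hV k⟩ :=
    Subtype.ext (by simpa using Matrix.col_mul_eq_sum V B j)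
  rw [this, map_sum]
  exact Finset.sum_congr rfl fun k _ => by rw [hf, hfV]

theorem qmk_X_pow_self {F : Type*} [CommRing F] (N : ℕ) : (qmk (X ^ N) : PolyQuot F N) = 0 :=
  Ideal.Quotient.eq_zero_iff_mem.2 (Ideal.mem_span_singleton_self _)

theorem stmt_7_general {F : Type*} [Field F] (p : ℕ) (e r n : ℕ)
    (φ : PolyQuot F (e * p) →ₐ[F] PolyQuot F (e * p))
    (hφ : φ (qmk X) = qmk (X ^ p))
    (V : Matrix (Fin n) (Fin n) (PolyQuot F (e * p)))
    (Fil : Submodule (PolyQuot F (e * p)) (Fin n → PolyQuot F (e * p)))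
    (hFil : Fil = Submodule.span (PolyQuot F (e * p)) (Set.range fun j i => V i j))
    (hur : ∀ x : Fin n → PolyQuot F (e * p),
      (qmk (X ^ (e * r)) : PolyQuot F (e * p)) • x ∈ Fil)
    (φr : ↥Fil →+ (Fin n → PolyQuot F (e * p)))
    (hsemi : ∀ (s : PolyQuot F (e * p)) (x : ↥Fil), φr (s • x) = φ s • φr x)
    (A : Matrix (Fin n) (Fin n) (PolyQuot F (e * p))) (hA : IsUnit A)
    (hφrA : ∀ (j : Fin n) (hj : (fun i => V i j) ∈ Fil),
      φr ⟨fun i => V i j, hj⟩ = fun i => A i j)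
    (V' B : Matrix (Fin n) (Fin n) (PolyQuot F (e * p))) (hB : IsUnit B)
    (hcong : ∃ E : Matrix (Fin n) (Fin n) (PolyQuot F (e * p)),
      A * V' = V * B + (qmk (X ^ (e * (r + 1))) : PolyQuot F (e * p)) • E) :
    (∃ bas : Module.Basis (Fin n) (PolyQuot F (e * p)) (Fin n → PolyQuot F (e * p)),
      ∀ j, bas j = fun i => A i j) ∧
    (∀ j : Fin n, (fun i => (A * V') i j) ∈ Fil) ∧
    Submodule.span (PolyQuot F (e * p)) (Set.range fun j i => (A * V') i j) = Fil ∧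
    (∀ (j : Fin n) (hj : (fun i => (A * V') i j) ∈ Fil),
      φr ⟨fun i => (A * V') i j, hj⟩ = ∑ i, φ (B i j) • (fun k => A k i)) := by
  obtain ⟨E, hE⟩ := hcong
  set t : PolyQuot F (e * p) := qmk (X ^ e)
  have ht : IsNilpotent t := ⟨p, by rw [← map_pow, ← pow_mul, qmk_X_pow_self]⟩
  have hφt : φ t = 0 := by
    rw [show t = qmk X ^ e from map_pow qmk X e, map_pow, hφ, ← map_pow, ← pow_mul, mul_comm,
      qmk_X_pow_self]
  have hcol : ∀ j, (A * V').col j =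
      (V * B).col j + t • ((qmk (X ^ (e * r)) : PolyQuot F (e * p)) • E.col j) := fun j => by
    rw [hE, smul_smul, ← map_mul, ← pow_add, show e + e * r = e * (r + 1) by ring]
    rfl
  have hFil' : Fil = Submodule.span _ (Set.range (V * B).col) :=
    hFil.trans (V.span_range_col_mul_of_isUnit hB).symm
  have hspan : Submodule.span _ (Set.range (A * V').col) = Fil := by
    rw [hFil']
    refine Submodule.span_range_eq_of_sub_mem_smul ht fun j => ?_
    rw [hcol, add_sub_cancel_left, ← hFil']
    exact Submodule.smul_mem_smul (Ideal.mem_span_singleton_self t) (hur _)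
  have hmem : ∀ j, (A * V').col j ∈ Fil := fun j => hspan ▸ Submodule.subset_span ⟨j, rfl⟩
  have hVB : ∀ j, (V * B).col j ∈ Fil := fun j => hFil' ▸ Submodule.subset_span ⟨j, rfl⟩
  have hV : ∀ k, V.col k ∈ Fil := fun k => hFil ▸ Submodule.subset_span ⟨k, rfl⟩
  refine ⟨Matrix.exists_basis_col_of_isUnit hA, hmem, hspan, fun j hj => ?_⟩
  have hsplit : (⟨(A * V').col j, hj⟩ : Fil) = ⟨(V * B).col j, hVB j⟩
      + t • ⟨qmk (X ^ (e * r)) • E.col j, hur _⟩ := Subtype.ext (hcol j)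
  have hkill : φr (t • ⟨_, hur (E.col j)⟩) = 0 := by
    rw [hsemi, hφt]
    -- `hsemi` uses the pointwise `Mul.toSMul` action, on which `zero_smul` does not fire
    exact funext fun _ => zero_mul _
  calc φr ⟨(A * V').col j, hj⟩ = φr ⟨(V * B).col j, hVB j⟩ := by
        rw [hsplit, map_add, hkill, add_zero]
    _ = ∑ i, φ (B i j) • A.col i := φr.map_col_mul_eq_sum hsemi hV hφrA B j _

/-- change of basis for Breuil modules, Lemma 2.2.8.
Let `S̄ = F[u]/(u^{ep})`, `φ` the `F`-algebra endomorphism of `S̄` with `φ(u) = u^p`,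
`M = S̄ⁿ`, `Fil` the span of the columns of `V` (containing `u^{er}M`), `φ_r : Fil → M`
additive and `φ`-semilinear, sending the `j`-th column of `V` to the `j`-th column of
`A ∈ GLₙ(S̄)`.  If `A·V′ ≡ V·B (mod u^{e(r+1)})` with `B ∈ GLₙ(S̄)`, then the columns of
`A` form a basis of `M`, the columns of `A·V′` lie in `Fil` and generate it, and
`φ_r` sends the `j`-th column of `A·V′` to `Σᵢ φ(B)ᵢⱼ · (i-th column of A)`. -/
theorem stmt_7 {F : Type*} [Field F] (p : ℕ) (hp : p.Prime)
    (e r n : ℕ) (he : 1 ≤ e) (hr : r ≤ p - 2)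
    (φ : PolyQuot F (e * p) →ₐ[F] PolyQuot F (e * p))
    (hφ : φ (qmk X) = qmk (X ^ p))
    (V : Matrix (Fin n) (Fin n) (PolyQuot F (e * p)))
    (Fil : Submodule (PolyQuot F (e * p)) (Fin n → PolyQuot F (e * p)))
    (hFil : Fil = Submodule.span (PolyQuot F (e * p)) (Set.range fun j i => V i j))
    (hur : ∀ x : Fin n → PolyQuot F (e * p),
      (qmk (X ^ (e * r)) : PolyQuot F (e * p)) • x ∈ Fil)
    (φr : ↥Fil →+ (Fin n → PolyQuot F (e * p)))
    (hsemi : ∀ (s : PolyQuot F (e * p)) (x : ↥Fil), φr (s • x) = φ s • φr x)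
    (A : Matrix (Fin n) (Fin n) (PolyQuot F (e * p))) (hA : IsUnit A)
    (hφrA : ∀ (j : Fin n) (hj : (fun i => V i j) ∈ Fil),
      φr ⟨fun i => V i j, hj⟩ = fun i => A i j)
    (V' B : Matrix (Fin n) (Fin n) (PolyQuot F (e * p))) (hB : IsUnit B)
    (hcong : ∃ E : Matrix (Fin n) (Fin n) (PolyQuot F (e * p)),
      A * V' = V * B + (qmk (X ^ (e * (r + 1))) : PolyQuot F (e * p)) • E) :
    (∃ bas : Module.Basis (Fin n) (PolyQuot F (e * p)) (Fin n → PolyQuot F (e * p)),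
      ∀ j, bas j = fun i => A i j) ∧
    (∀ j : Fin n, (fun i => (A * V') i j) ∈ Fil) ∧
    Submodule.span (PolyQuot F (e * p)) (Set.range fun j i => (A * V') i j) = Fil ∧
    (∀ (j : Fin n) (hj : (fun i => (A * V') i j) ∈ Fil),
      φr ⟨fun i => (A * V') i j, hj⟩ = ∑ i, φ (B i j) • (fun k => A k i)) :=
  stmt_7_general p e r n φ hφ V Fil hFil hur φr hsemi A hA hφrA V' B hB hcong
end

section
/- Let p be a prime, F a field, e ≥ 1 and 0 ≤ r ≤ p − 2 integers. Set S̄ := F[u]/(u^{ep}) and let φ : S̄ → S̄ be the F-algebra endomorphism with φ(u) = u^{p}. Let M be a finite free S̄-module, Fil ⊆ M an S̄-submodule with u^{er}M ⊆ Fil, and φ_r : Fil → M an additive map satisfying φ_r(s·x) = φ(s)·φ_r(x) for all s ∈ S̄, x ∈ Fil, such that the S̄-span of φ_r(Fil) equals M. Let N ⊆ M be an S̄-submodule that is free as an S̄-module (equivalently, a direct summand of M) and satisfies φ_r(N ∩ Fil) ⊆ N. Then the S̄-span of φ_r(N ∩ Fil) equals N. -/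
open Polynomial

set_option synthInstance.maxHeartbeats 400000
set_option maxHeartbeats 800000

/-!
Let `u` be the class of `X` and `G` the span of `φ_r(N ∩ Fil)`, so `G ⊆ N`. A finite module `V`
over `F[u]/(u^q)` is generated by `dim_F V/uV = dim_F ker(u|V)` elements, a number that can only
drop on submodules. For the image of `Fil` in `M/N` this gives `n ≤ dim_F M/(N + uM)` elements of
`Fil` which together with `Fil ∩ N` generate `Fil`; by semilinearity their images under `φ_r`
together with `G` generate `M`. Hence `dim_F M/(G + uM) ≤ dim_F M/(N + uM)`, which forces
`G + uM = N + uM`. Freeness of `N` gives `N ∩ uM = uN`, so `N ⊆ G + uN`, and Nakayama for the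
nilpotent `u` yields `N = G`.
-/

open scoped Pointwise
open Module

namespace Submodule

variable {R M : Type*} [CommRing R] [AddCommGroup M] [Module R M]

theorem le_of_le_sup_smul_of_isNilpotent {u : R} (hu : IsNilpotent u) {A B : Submodule R M}
    (h : B ≤ A ⊔ u • B) : B ≤ A := by
  obtain ⟨n, hn⟩ := hu
  have hpow (k : ℕ) : B ≤ A ⊔ u ^ k • B := by
    induction k with
    | zero => simp
    | succ k ih =>
      calc B ≤ A ⊔ u • B := h
        _ ≤ A ⊔ u • (A ⊔ u ^ k • B) := by gcongr
        _ = A ⊔ u • A ⊔ u ^ (k + 1) • B := by rw [smul_sup', smul_smul, ← pow_succ', sup_assoc]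
        _ ≤ A ⊔ u ^ (k + 1) • B := by gcongr; exact sup_le le_rfl (smul_le_self_of_tower u A)
  simpa [hn] using hpow n

end Submodule

section

variable {R M : Type*} [CommRing R] [AddCommGroup M] [Module R M] {u : R}

theorem Module.Free.mem_smul_top_of_pow_smul_eq_zero {k : ℕ}
    (hu : ∀ s : R, u ^ k * s = 0 ↔ u ∣ s) [Module.Free R M] {x : M} (hx : u ^ k • x = 0) :
    x ∈ u • (⊤ : Submodule R M) := by
  let b := Module.Free.chooseBasis R M
  have hcoeff (i) : u ∣ b.repr x i := (hu _).1 (by simpa using congr(b.repr $hx i))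
  rw [← b.linearCombination_repr x, Finsupp.linearCombination_apply]
  refine Submodule.finsuppSum_mem _ _ _ _ fun i _ => ?_
  obtain ⟨c, hc⟩ := hcoeff i
  rw [hc, mul_smul]
  exact Submodule.smul_mem_pointwise_smul _ _ _ trivial

theorem Submodule.inf_smul_top_le_smul_of_free {k : ℕ} (hu : ∀ s : R, u ^ k * s = 0 ↔ u ∣ s)
    (N : Submodule R M) [Module.Free R N] : N ⊓ u • ⊤ ≤ u • N := by
  rintro x ⟨hxN, hxu⟩
  obtain ⟨m, -, rfl⟩ := (Submodule.mem_smul_pointwise_iff_exists _ _ _).1 hxu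
  have hx : u ^ k • (⟨u • m, hxN⟩ : N) = 0 := by
    ext; simp [smul_smul, (hu u).2 dvd_rfl]
  simpa [Submodule.map_pointwise_smul] using
    Submodule.mem_map_of_mem (f := N.subtype) (Module.Free.mem_smul_top_of_pow_smul_eq_zero hu hx)

end

section

variable {F R : Type*} [Field F] [CommRing R] [Algebra F R] {u : R}
  {X Y : Type*} [AddCommGroup X] [Module R X] [Module F X] [IsScalarTower F R X]
  [AddCommGroup Y] [Module R Y] [Module F Y] [IsScalarTower F R Y]

variable (F) in
theorem Submodule.restrictScalars_smul_top (u : R) :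
    (u • (⊤ : Submodule R X)).restrictScalars F =
      LinearMap.range ((LinearMap.lsmul R X u).restrictScalars F) := by
  ext x
  simp [Submodule.mem_smul_pointwise_iff_exists, eq_comm]

variable (F) in
theorem finrank_quotient_smul_top_eq_finrank_ker [FiniteDimensional F X] (u : R) :
    finrank F (X ⧸ u • (⊤ : Submodule R X)) =
      finrank F (LinearMap.ker ((LinearMap.lsmul R X u).restrictScalars F)) := by
  have hquot :=
    Submodule.finrank_quotient_add_finrank ((u • (⊤ : Submodule R X)).restrictScalars F)
  have hrank :=
    LinearMap.finrank_range_add_finrank_ker ((LinearMap.lsmul R X u).restrictScalars F)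
  have hsub : finrank F ((u • (⊤ : Submodule R X)).restrictScalars F) =
      finrank F (LinearMap.range ((LinearMap.lsmul R X u).restrictScalars F)) := by
    rw [Submodule.restrictScalars_smul_top]
  rw [← (Submodule.Quotient.restrictScalarsEquiv F _).finrank_eq]
  omega

theorem finrank_quotient_smul_top_le_of_injective [FiniteDimensional F X] [FiniteDimensional F Y]
    (u : R) {f : Y →ₗ[R] X} (hf : Function.Injective f) :
    finrank F (Y ⧸ u • (⊤ : Submodule R Y)) ≤ finrank F (X ⧸ u • (⊤ : Submodule R X)) := by
  rw [finrank_quotient_smul_top_eq_finrank_ker, finrank_quotient_smul_top_eq_finrank_ker]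
  refine LinearMap.finrank_le_finrank_of_injective
    (f := (f.restrictScalars F).restrict fun y hy => ?_) fun y z hyz => ?_
  · have hy : u • y = 0 := hy
    change u • f y = 0
    rw [← f.map_smul, hy, map_zero]
  · exact Subtype.ext (hf congr(($hyz : X)))

theorem exists_span_range_eq_top_of_isNilpotent [FiniteDimensional F X] (hu : IsNilpotent u) :
    ∃ v : Fin (finrank F (X ⧸ u • (⊤ : Submodule R X))) → X,
      Submodule.span R (Set.range v) = ⊤ := by
  let b := Module.finBasis F (X ⧸ u • (⊤ : Submodule R X))
  have hb : Submodule.span R (Set.range b) = ⊤ := by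
    rw [← Submodule.restrictScalars_eq_top_iff F, eq_top_iff, ← b.span_eq]
    exact Submodule.span_le_restrictScalars F R _
  refine ⟨fun j => Quotient.out (b j), top_le_iff.1 ?_⟩
  refine Submodule.le_of_le_sup_smul_of_isNilpotent hu ?_
  rw [sup_comm, top_le_iff, ← Submodule.map_mkQ_eq_top, Submodule.map_span, ← Set.range_comp]
  simpa [Function.comp_def] using hb.ge

theorem finrank_quotient_le_card (hres : ∀ s : R, ∃ a : F, u ∣ s - algebraMap F R a)
    {P : Submodule R X} (hP : u • ⊤ ≤ P) {ι : Type*} [Fintype ι] {v : ι → X}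
    (hv : Submodule.span R (Set.range v) ⊔ P = ⊤) :
    finrank F (X ⧸ P) ≤ Fintype.card ι := by
  have hu0 (y : X ⧸ P) : u • y = 0 := by
    induction y using Submodule.Quotient.induction_on with
    | H x =>
      exact (Submodule.Quotient.mk_eq_zero P).2
        (hP (Submodule.smul_mem_pointwise_smul _ _ _ trivial))
  have hR : Submodule.span R (Set.range (P.mkQ ∘ v)) = ⊤ := by
    rw [Set.range_comp, ← Submodule.map_span, Submodule.map_mkQ_eq_top, sup_comm, hv]
  have hF : Submodule.span F (Set.range (P.mkQ ∘ v)) = ⊤ := by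
    rw [eq_top_iff]
    rintro y -
    have hy : y ∈ Submodule.span R (Set.range (P.mkQ ∘ v)) := hR ▸ trivial
    induction hy using Submodule.span_induction with
    | mem y hy => exact Submodule.subset_span hy
    | zero => exact Submodule.zero_mem _
    | add y z _ _ hy hz => exact Submodule.add_mem _ hy hz
    | smul s y _ hy =>
      obtain ⟨a, t, ht⟩ := hres s
      rw [sub_eq_iff_eq_add'.1 ht, add_smul, algebraMap_smul, mul_smul, hu0, add_zero]
      exact Submodule.smul_mem _ a hy
  calc finrank F (X ⧸ P) = (Set.range (P.mkQ ∘ v)).finrank F := by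
        rw [Set.finrank, hF, finrank_top]
    _ ≤ Fintype.card ι := finrank_range_le_card _

variable (F) in
theorem finrank_quotient_quotient_smul_top (N : Submodule R X) (u : R) :
    finrank F ((X ⧸ N) ⧸ u • (⊤ : Submodule R (X ⧸ N))) = finrank F (X ⧸ (N ⊔ u • ⊤)) := by
  have hmap : (u • (⊤ : Submodule R X)).map N.mkQ = u • ⊤ := by
    rw [Submodule.map_pointwise_smul, Submodule.map_top, Submodule.range_mkQ]
  rw [← hmap]
  exact ((N.quotientQuotientEquivQuotientSup _).restrictScalars F).finrank_eq

variable (F) in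
theorem Submodule.eq_of_le_of_finrank_quotient_le [FiniteDimensional F X] {A B : Submodule R X}
    (hAB : A ≤ B) (h : finrank F (X ⧸ A) ≤ finrank F (X ⧸ B)) : A = B := by
  have hA := Submodule.finrank_quotient_add_finrank (A.restrictScalars F)
  have hB := Submodule.finrank_quotient_add_finrank (B.restrictScalars F)
  rw [(Submodule.Quotient.restrictScalarsEquiv F A).finrank_eq] at hA
  rw [(Submodule.Quotient.restrictScalarsEquiv F B).finrank_eq] at hB
  exact Submodule.restrictScalars_injective F _ _ <|
    Submodule.eq_of_le_of_finrank_le (S₂ := B.restrictScalars F) hAB (by omega)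

theorem exists_fin_span_sup_comap_eq_top [FiniteDimensional F X] (hu : IsNilpotent u)
    (A B : Submodule R X) :
    ∃ (n : ℕ) (x : Fin n → A), n ≤ finrank F (X ⧸ (B ⊔ u • ⊤)) ∧
      Submodule.span R (Set.range x) ⊔ B.comap A.subtype = ⊤ := by
  let g : A →ₗ[R] LinearMap.range (B.mkQ ∘ₗ A.subtype) := (B.mkQ ∘ₗ A.subtype).rangeRestrict
  have : FiniteDimensional F A := inferInstanceAs (FiniteDimensional F (A.restrictScalars F))
  have : FiniteDimensional F (LinearMap.range (B.mkQ ∘ₗ A.subtype)) :=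
    inferInstanceAs
      (FiniteDimensional F ((LinearMap.range (B.mkQ ∘ₗ A.subtype)).restrictScalars F))
  obtain ⟨y, hy⟩ := exists_span_range_eq_top_of_isNilpotent (F := F) hu
    (X := LinearMap.range (B.mkQ ∘ₗ A.subtype))
  choose x hx using fun j => (B.mkQ ∘ₗ A.subtype).surjective_rangeRestrict (y j)
  refine ⟨_, x, ?_, ?_⟩
  · rw [← finrank_quotient_quotient_smul_top]
    exact finrank_quotient_smul_top_le_of_injective u (Submodule.injective_subtype _)
  · have hker : LinearMap.ker g = B.comap A.subtype := by
      rw [LinearMap.ker_rangeRestrict, LinearMap.ker_comp, Submodule.ker_mkQ]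
    rw [← hker, ← Submodule.comap_map_eq, Submodule.map_span, ← Set.range_comp,
      show g ∘ x = y from funext hx, hy, Submodule.comap_top]

end

section Breuil

variable {F R M : Type*} [Field F] [CommRing R] [Algebra F R] [AddCommGroup M] [Module R M]
  [Module F M] [IsScalarTower F R M] {φ : R → R} {Fil : Submodule R M} {φr : Fil →+ M}

theorem span_range_comp_sup_span_image_eq_top
    (hsemi : ∀ (s : R) (x : Fil), φr (s • x) = φ s • φr x)
    (hgen : Submodule.span R (Set.range φr) = ⊤) {N : Submodule R M}
    {ι : Type*} [Fintype ι] {x : ι → Fil}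
    (hx : Submodule.span R (Set.range x) ⊔ N.comap Fil.subtype = ⊤) :
    Submodule.span R (Set.range (φr ∘ x)) ⊔ Submodule.span R (φr '' {y | (y : M) ∈ N}) = ⊤ := by
  rw [eq_top_iff, ← hgen, Submodule.span_le]
  rintro _ ⟨a, rfl⟩
  obtain ⟨y, hy, z, hz, rfl⟩ := Submodule.mem_sup.1 (hx.ge (Submodule.mem_top (x := a)))
  obtain ⟨c, rfl⟩ := (Submodule.mem_span_range_iff_exists_fun R).1 hy
  rw [map_add, map_sum]
  simp_rw [hsemi]
  refine Submodule.add_mem _ (Submodule.mem_sup_left (Submodule.sum_mem _ fun j _ => ?_))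
    (Submodule.mem_sup_right (Submodule.subset_span ⟨z, hz, rfl⟩))
  exact Submodule.smul_mem _ _ (Submodule.subset_span ⟨j, rfl⟩)

theorem finrank_quotient_span_image_sup_smul_top_le [FiniteDimensional F M] {u : R}
    (hu : IsNilpotent u) (hres : ∀ s : R, ∃ a : F, u ∣ s - algebraMap F R a)
    (hsemi : ∀ (s : R) (x : Fil), φr (s • x) = φ s • φr x)
    (hgen : Submodule.span R (Set.range φr) = ⊤) (N : Submodule R M) :
    finrank F (M ⧸ (Submodule.span R (φr '' {x | (x : M) ∈ N}) ⊔ u • ⊤)) ≤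
      finrank F (M ⧸ (N ⊔ u • ⊤)) := by
  obtain ⟨n, x, hn, hx⟩ := exists_fin_span_sup_comap_eq_top (F := F) hu Fil N
  refine (finrank_quotient_le_card hres le_sup_right (v := φr ∘ x) ?_).trans
    ((Fintype.card_fin n).trans_le hn)
  rw [← sup_assoc, span_range_comp_sup_span_image_eq_top hsemi hgen hx, top_sup_eq]

/-- The ring enters only through `R/(u) = F` (`hres`) and `ann(u^k) = (u)` (`hdiv`), as for
`R = F[u]/(u^(k+1))`. -/
theorem span_image_eq_of_free [FiniteDimensional F M] {u : R} {k : ℕ}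
    (hres : ∀ s : R, ∃ a : F, u ∣ s - algebraMap F R a) (hdiv : ∀ s : R, u ^ k * s = 0 ↔ u ∣ s)
    (hsemi : ∀ (s : R) (x : Fil), φr (s • x) = φ s • φr x)
    (hgen : Submodule.span R (Set.range φr) = ⊤) (N : Submodule R M) [Module.Free R N]
    (hNstab : ∀ x : Fil, (x : M) ∈ N → φr x ∈ N) :
    Submodule.span R (φr '' {x | (x : M) ∈ N}) = N := by
  set G := Submodule.span R (φr '' {x | (x : M) ∈ N})
  have hu : IsNilpotent u := ⟨k + 1, by rw [pow_succ]; exact (hdiv u).2 dvd_rfl⟩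
  have hGN : G ≤ N := Submodule.span_le.2 <| by rintro _ ⟨x, hx, rfl⟩; exact hNstab x hx
  have hsup : G ⊔ u • ⊤ = N ⊔ u • ⊤ :=
    Submodule.eq_of_le_of_finrank_quotient_le F (sup_le_sup_right hGN _)
      (finrank_quotient_span_image_sup_smul_top_le hu hres hsemi hgen N)
  refine le_antisymm hGN (Submodule.le_of_le_sup_smul_of_isNilpotent hu ?_)
  calc N ≤ (G ⊔ u • ⊤) ⊓ N := le_inf (hsup ▸ le_sup_left) le_rfl
    _ = G ⊔ u • ⊤ ⊓ N := sup_inf_assoc_of_le _ hGN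
    _ ≤ G ⊔ u • N :=
      sup_le_sup_left (inf_comm (u • ⊤) N ▸ N.inf_smul_top_le_smul_of_free hdiv) _

end Breuil

namespace PolyQuot

variable {F : Type*} [Field F] {q : ℕ}

theorem X_pow_eq_zero : (qmk X : PolyQuot F q) ^ q = 0 := by
  rw [← map_pow]
  exact Ideal.Quotient.eq_zero_iff_mem.2 (Ideal.mem_span_singleton_self _)

theorem X_dvd_sub_algebraMap (s : PolyQuot F q) :
    ∃ a : F, qmk X ∣ s - algebraMap F (PolyQuot F q) a := by
  obtain ⟨g, rfl⟩ := Ideal.Quotient.mk_surjective s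
  refine ⟨g.coeff 0, qmk g.divX, ?_⟩
  rw [← map_mul, eq_sub_of_add_eq (X_mul_divX_add g), map_sub]
  rfl

theorem X_pow_pred_mul_eq_zero_iff (s : PolyQuot F q) :
    qmk X ^ (q - 1) * s = 0 ↔ qmk X ∣ s := by
  rcases q with _ | q
  · have : Subsingleton (PolyQuot F 0) := Ideal.Quotient.subsingleton_iff.2 (by simp)
    exact iff_of_true (Subsingleton.elim _ _) ⟨0, Subsingleton.elim _ _⟩
  rw [Nat.add_sub_cancel]
  constructor
  · obtain ⟨g, rfl⟩ := Ideal.Quotient.mk_surjective s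
    intro h
    rw [← map_pow, ← map_mul, Ideal.Quotient.eq_zero_iff_mem, Ideal.mem_span_singleton,
      pow_succ] at h
    obtain ⟨c, rfl⟩ := (mul_dvd_mul_iff_left (pow_ne_zero q X_ne_zero)).1 h
    exact ⟨qmk c, map_mul _ _ _⟩
  · rintro ⟨c, rfl⟩
    rw [← mul_assoc, ← pow_succ, X_pow_eq_zero, zero_mul]

end PolyQuot

theorem stmt_8_general {F : Type*} [Field F] (p : ℕ)
    (e : ℕ)
    (φ : PolyQuot F (e * p) →ₐ[F] PolyQuot F (e * p))
    {M : Type*} [AddCommGroup M] [Module (PolyQuot F (e * p)) M]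
    [Module.Finite (PolyQuot F (e * p)) M]
    (Fil : Submodule (PolyQuot F (e * p)) M)
    (φr : ↥Fil →+ M)
    (hsemi : ∀ (s : PolyQuot F (e * p)) (x : ↥Fil), φr (s • x) = φ s • φr x)
    (hgen : Submodule.span (PolyQuot F (e * p)) (Set.range ⇑φr) = ⊤)
    (N : Submodule (PolyQuot F (e * p)) M)
    (hNfree : Module.Free (PolyQuot F (e * p)) ↥N)
    (hNstab : ∀ x : ↥Fil, (x : M) ∈ N → φr x ∈ N) :
    Submodule.span (PolyQuot F (e * p)) (⇑φr '' {x : ↥Fil | (x : M) ∈ N}) = N := by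
  let : Module F M := Module.compHom M (algebraMap F (PolyQuot F (e * p)))
  have : IsScalarTower F (PolyQuot F (e * p)) M :=
    ⟨fun a s m => (congrArg (· • m) (Algebra.smul_def a s)).trans (mul_smul _ s m)⟩
  have : Module.Finite F (PolyQuot F (e * p)) := (monic_X_pow _).finite_quotient
  have : Module.Finite F M := .trans (PolyQuot F (e * p)) M
  exact span_image_eq_of_free PolyQuot.X_dvd_sub_algebraMap PolyQuot.X_pow_pred_mul_eq_zero_iff
    hsemi hgen N hNstab

/-- essential content of Lemma 2.3.2. Let `S̄ = F[u]/(u^{ep})`, `φ` the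
`F`-algebra endomorphism of `S̄` with `φ(u) = u^p`, and `(M, Fil, φ_r)` a Breuil-module
datum: `u^{er}M ⊆ Fil`, `φ_r : Fil → M` additive and `φ`-semilinear with
`span(φ_r(Fil)) = M`.  If `N ⊆ M` is an `S̄`-free submodule (equivalently, a direct
summand) with `φ_r(N ∩ Fil) ⊆ N`, then the `S̄`-span of `φ_r(N ∩ Fil)` equals `N`. -/
theorem stmt_8 {F : Type*} [Field F] (p : ℕ) (hp : p.Prime)
    (e r : ℕ) (he : 1 ≤ e) (hr : r ≤ p - 2)
    (φ : PolyQuot F (e * p) →ₐ[F] PolyQuot F (e * p))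
    (hφ : φ (qmk X) = qmk (X ^ p))
    {M : Type*} [AddCommGroup M] [Module (PolyQuot F (e * p)) M]
    [Module.Free (PolyQuot F (e * p)) M] [Module.Finite (PolyQuot F (e * p)) M]
    (Fil : Submodule (PolyQuot F (e * p)) M)
    (hur : ∀ x : M, (qmk (X ^ (e * r)) : PolyQuot F (e * p)) • x ∈ Fil)
    (φr : ↥Fil →+ M)
    (hsemi : ∀ (s : PolyQuot F (e * p)) (x : ↥Fil), φr (s • x) = φ s • φr x)
    (hgen : Submodule.span (PolyQuot F (e * p)) (Set.range ⇑φr) = ⊤)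
    (N : Submodule (PolyQuot F (e * p)) M)
    (hNfree : Module.Free (PolyQuot F (e * p)) ↥N)
    (hNstab : ∀ x : ↥Fil, (x : M) ∈ N → φr x ∈ N) :
    Submodule.span (PolyQuot F (e * p)) (⇑φr '' {x : ↥Fil | (x : M) ∈ N}) = N :=
  stmt_8_general p e φ Fil φr hsemi hgen N hNfree hNstab
end

section
/- Let p be a prime, k a field of characteristic p, and e ≥ 1, 0 ≤ r ≤ p − 2 integers. Set S̄ := k[u]/(u^{ep}) and let φ : S̄ → S̄ be the absolute Frobenius x ↦ x^{p} (so φ(Σ aᵢuⁱ) = Σ aᵢ^{p} u^{ip}). Let M be a finite free S̄-module of rank n, Fil ⊆ M an S̄-submodule with u^{er}M ⊆ Fil, and φ_r : Fil → M an additive map with φ_r(s·x) = φ(s)·φ_r(x) for all s ∈ S̄, x ∈ Fil, whose image generates M over S̄. Then: (a) Fil/u^{e}·Fil is a free k[u]/(u^{e})-module of rank n; and (b) the S̄-linear map S̄ ⊗_{ψ, k[u]/(u^{e})} (Fil/u^{e}Fil) → M given by s ⊗ x̄ ↦ s·φ_r(x) is an isomorphism, where ψ : k[u]/(u^{e}) →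 S̄ is the ring homomorphism x ↦ x^{p}. -/
open Polynomial TensorProduct Pointwise

theorem Submodule.finrank_eq_card_of_smul_mem {R ι : Type*} [CommRing R] [IsDomain R]
    [IsPrincipalIdealRing R] [Fintype ι] (L : Submodule R (ι → R)) {a : R} (ha : a ≠ 0)
    (h : ∀ x, a • x ∈ L) : Module.finrank R L = Fintype.card ι := by
  have htors : Module.rank R ((ι → R) ⧸ L) = 0 := by
    refine rank_eq_zero_iff.mpr fun q => ?_
    obtain ⟨x, rfl⟩ := Submodule.Quotient.mk_surjective L q
    exact ⟨a, ha, (Submodule.Quotient.mk_eq_zero L).mpr (h x)⟩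
  have := rank_quotient_add_rank_of_isDomain L
  rw [htors, zero_add, rank_fun'] at this
  exact Module.finrank_eq_of_rank_eq this

theorem Module.Basis.repr_mem_of_mem_smul_top {R L ι : Type*} [CommRing R] [AddCommGroup L]
    [Module R L] {I : Ideal R} (b : Basis ι R L) {x : L} (hx : x ∈ I • (⊤ : Submodule R L))
    (i : ι) : b.repr x i ∈ I :=
  Submodule.smul_induction_on hx (fun r hr y _ => by simpa using I.mul_mem_right _ hr)
    fun y z hy hz => by simpa using add_mem hy hz

noncomputable def Module.Basis.quotientOfSurjective {R L Q ι : Type*} [CommRing R] {I : Ideal R}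
    [AddCommGroup L] [Module R L] [AddCommGroup Q] [Module (R ⧸ I) Q] [Fintype ι]
    (b : Basis ι R L) (θ : L →ₛₗ[Ideal.Quotient.mk I] Q) (hθ : Function.Surjective θ)
    (hker : LinearMap.ker θ ≤ I • ⊤) : Basis ι (R ⧸ I) Q :=
  .mk (v := θ ∘ b)
    (Fintype.linearIndependent_iff.mpr fun g hg i => by
      choose G hG using fun i => Ideal.Quotient.mk_surjective (g i)
      have hsum : ∑ j, G j • b j ∈ LinearMap.ker θ := by
        simpa [map_sum, LinearMap.map_smulₛₗ, hG] using hg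
      have := b.repr_mem_of_mem_smul_top (hker hsum) i
      rwa [b.repr_sum_self, ← Ideal.Quotient.eq_zero_iff_mem, hG] at this)
    (by rw [Set.range_comp, ← Submodule.map_span, b.span_eq, Submodule.map_top,
      LinearMap.range_eq_top.mpr hθ])

theorem LinearMap.ker_mkQ_comp_le_of_surjective {R S L F : Type*} [CommRing R] [CommRing S]
    {σ : R →+* S} [AddCommGroup L] [Module R L] [AddCommGroup F] [Module S F]
    (ρ : L →ₛₗ[σ] F) (hρ : Function.Surjective ρ) (a : R)
    (hker : LinearMap.ker ρ ≤ Ideal.span {a} • ⊤) :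
    LinearMap.ker ((Ideal.span {σ a} • ⊤ : Submodule S F).mkQ ∘ₛₗ ρ) ≤ Ideal.span {a} • ⊤ := by
  intro x hx
  rw [LinearMap.mem_ker, LinearMap.comp_apply, Submodule.mkQ_apply, Submodule.Quotient.mk_eq_zero,
    Submodule.ideal_span_singleton_smul, Submodule.mem_smul_pointwise_iff_exists] at hx
  obtain ⟨y, -, hy⟩ := hx
  obtain ⟨x₁, rfl⟩ := hρ y
  have hdiff : x - a • x₁ ∈ LinearMap.ker ρ := by
    rw [LinearMap.mem_ker, map_sub, LinearMap.map_smulₛₗ, hy, sub_self]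
  simpa using add_mem (hker hdiff)
    (Submodule.smul_mem_smul (Ideal.mem_span_singleton_self a) (Submodule.mem_top (x := x₁)))

namespace Module.Basis

variable {R M ι : Type*} [CommRing R] {J : Ideal R} [AddCommGroup M] [Module (R ⧸ J) M]
  [Fintype ι]

noncomputable def liftCoeffs (b : Basis ι (R ⧸ J) M) : (ι → R) →ₛₗ[Ideal.Quotient.mk J] M where
  toFun x := b.equivFun.symm fun i => Ideal.Quotient.mk J (x i)
  map_add' x y := by rw [← map_add]; rfl
  map_smul' c x := by rw [← map_smul]; rfl

variable (b : Basis ι (R ⧸ J) M)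

theorem liftCoeffs_apply (x : ι → R) :
    b.liftCoeffs x = b.equivFun.symm fun i => Ideal.Quotient.mk J (x i) := rfl

theorem liftCoeffs_surjective : Function.Surjective b.liftCoeffs := by
  intro m
  choose x hx using fun i => Ideal.Quotient.mk_surjective (b.equivFun m i)
  exact ⟨x, by simp [liftCoeffs_apply, hx]⟩

theorem liftCoeffs_eq_zero_iff (x : ι → R) : b.liftCoeffs x = 0 ↔ ∀ i, x i ∈ J := by
  rw [liftCoeffs_apply, LinearEquiv.map_eq_zero_iff, funext_iff]
  simp only [Pi.zero_apply, Ideal.Quotient.eq_zero_iff_mem]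

theorem ker_submoduleComap_liftCoeffs_le (Fil : Submodule (R ⧸ J) M) {a d : R}
    (hJ : J ≤ Ideal.span {a * d}) (hd : ∀ m, Ideal.Quotient.mk J d • m ∈ Fil) :
    LinearMap.ker (b.liftCoeffs.submoduleComap Fil) ≤ Ideal.span {a} • ⊤ := by
  intro z hz
  have hz0 : b.liftCoeffs z = 0 := congrArg Subtype.val hz
  choose w hw using fun i =>
    Ideal.mem_span_singleton'.mp (hJ ((b.liftCoeffs_eq_zero_iff _).mp hz0 i))
  have hdw : d • w ∈ Fil.comap b.liftCoeffs := by
    simpa [LinearMap.map_smulₛₗ] using hd (b.liftCoeffs w)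
  have hz : z = a • ⟨d • w, hdw⟩ := Subtype.ext <| funext fun i => by
    simp [← hw i, mul_comm, mul_left_comm]
  rw [hz]
  exact Submodule.smul_mem_smul (Ideal.mem_span_singleton_self a) Submodule.mem_top

end Module.Basis

theorem Submodule.nonempty_basis_quotient_smul_top {R M ι : Type*} [CommRing R] [IsDomain R]
    [IsPrincipalIdealRing R] {J : Ideal R} [AddCommGroup M] [Module (R ⧸ J) M] [Fintype ι]
    (b : Module.Basis ι (R ⧸ J) M) (Fil : Submodule (R ⧸ J) M) {a d : R} (hd0 : d ≠ 0)
    (hJ : J ≤ Ideal.span {a * d}) (hd : ∀ m, Ideal.Quotient.mk J d • m ∈ Fil)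
    [Module (R ⧸ Ideal.span {a})
      (Fil ⧸ (Ideal.span {Ideal.Quotient.mk J a} • ⊤ : Submodule (R ⧸ J) Fil))]
    (hcompat : ∀ (g : R)
      (q : Fil ⧸ (Ideal.span {Ideal.Quotient.mk J a} • ⊤ : Submodule (R ⧸ J) Fil)),
      Ideal.Quotient.mk (Ideal.span {a}) g • q = Ideal.Quotient.mk J g • q) :
    Nonempty (Module.Basis ι (R ⧸ Ideal.span {a})
      (Fil ⧸ (Ideal.span {Ideal.Quotient.mk J a} • ⊤ : Submodule (R ⧸ J) Fil))) := by
  let L := Fil.comap b.liftCoeffs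
  have hL : ∀ x, d • x ∈ L := fun x => by
    simpa [L, LinearMap.map_smulₛₗ] using hd (b.liftCoeffs x)
  let bL : Module.Basis ι R L := (Module.finBasisOfFinrankEq R L
    (L.finrank_eq_card_of_smul_mem hd0 hL)).reindex (Fintype.equivFin ι).symm
  let ρ := b.liftCoeffs.submoduleComap Fil
  have hρ := LinearMap.submoduleComap_surjective_of_surjective _ Fil b.liftCoeffs_surjective
  let θ₀ := (Ideal.span {Ideal.Quotient.mk J a} • ⊤ : Submodule (R ⧸ J) Fil).mkQ ∘ₛₗ ρ
  let θ : L →ₛₗ[Ideal.Quotient.mk (Ideal.span {a})] _ :=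
    { θ₀.toAddMonoidHom with
      map_smul' := fun g x => (θ₀.map_smulₛₗ g x).trans (hcompat g (θ₀ x)).symm }
  exact ⟨bL.quotientOfSurjective θ ((Submodule.mkQ_surjective _).comp hρ)
    (ρ.ker_mkQ_comp_le_of_surjective hρ a (b.ker_submoduleComap_liftCoeffs_le Fil hJ hd))⟩

theorem AddMonoidHom.toAddSubgroup_smul_top_le_ker_of_pow_eq_zero {S F M : Type*} [CommRing S]
    [AddCommGroup F] [Module S F] [AddCommGroup M] [Module S M] {p : ℕ} (φ : F →+ M)
    (hφ : ∀ (s : S) x, φ (s • x) = s ^ p • φ x) {a : S} (ha : a ^ p = 0) :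
    (Ideal.span {a} • ⊤ : Submodule S F).toAddSubgroup ≤ φ.ker := by
  intro x hx
  rw [Submodule.mem_toAddSubgroup, Submodule.ideal_span_singleton_smul,
    Submodule.mem_smul_pointwise_iff_exists] at hx
  obtain ⟨y, -, rfl⟩ := hx
  rw [AddMonoidHom.mem_ker, hφ, ha, zero_smul]

theorem LinearMap.bijective_of_surjective_of_basis {S V M ι : Type*} [CommRing S]
    [AddCommGroup V] [Module S V] [AddCommGroup M] [Module S M] [Finite ι]
    (bV : Module.Basis ι S V) (bM : Module.Basis ι S M) (Φ : V →ₗ[S] M)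
    (hΦ : Function.Surjective Φ) : Function.Bijective Φ := by
  have : Module.Finite S M := .of_basis bM
  let ε := bM.equiv bV (Equiv.refl ι)
  have h := OrzechProperty.bijective_of_surjective_endomorphism (Φ ∘ₗ ε.toLinearMap)
    (hΦ.comp ε.surjective)
  simpa using h.comp ε.symm.bijective

theorem exists_bijective_baseChange_lift {T S Q M ι : Type*} [CommRing T] [CommRing S]
    [Algebra T S] [AddCommGroup Q] [Module T Q] [AddCommGroup M] [Module S M] [Finite ι]
    (bQ : Module.Basis ι T Q) (bM : Module.Basis ι S M) (f : Q →+ M)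
    (hf : ∀ t q, f (t • q) = algebraMap T S t • f q)
    (hspan : Submodule.span S (Set.range f) = ⊤) :
    ∃ Φ : S ⊗[T] Q →ₗ[S] M, (∀ s q, Φ (s ⊗ₜ q) = s • f q) ∧ Function.Bijective Φ := by
  let : Module T M := Module.compHom M (algebraMap T S)
  have : IsScalarTower T S M := ⟨fun t s m => by
    rw [Algebra.smul_def, mul_smul]; rfl⟩
  let fT : Q →ₗ[T] M := { f with map_smul' := hf }
  have hsurj : Function.Surjective (fT.liftBaseChange S) := by
    rw [← LinearMap.range_eq_top, LinearMap.range_liftBaseChange, LinearMap.coe_range]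
    exact hspan
  exact ⟨fT.liftBaseChange S, fT.liftBaseChange_tmul S,
    LinearMap.bijective_of_surjective_of_basis (bQ.baseChange S) bM _ hsurj⟩

theorem stmt_10_general (p : ℕ) (hp : p.Prime) {k : Type*} [Field k]
    (e r n : ℕ) (hr : r ≤ p - 2)
    {M : Type*} [AddCommGroup M] [Module (PolyQuot k (e * p)) M]
    (bM : Module.Basis (Fin n) (PolyQuot k (e * p)) M)
    (Fil : Submodule (PolyQuot k (e * p)) M)
    (hur : ∀ x : M, (qmk (X ^ (e * r)) : PolyQuot k (e * p)) • x ∈ Fil)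
    (φr : ↥Fil →+ M)
    (hsemi : ∀ (s : PolyQuot k (e * p)) (x : ↥Fil), φr (s • x) = s ^ p • φr x)
    (hgen : Submodule.span (PolyQuot k (e * p)) (Set.range ⇑φr) = ⊤)
    [Module (PolyQuot k e)
      (↥Fil ⧸ (Ideal.span {(qmk (X ^ e) : PolyQuot k (e * p))} •
        (⊤ : Submodule (PolyQuot k (e * p)) ↥Fil)))]
    (hTQ : ∀ (g : Polynomial k)
        (q : ↥Fil ⧸ (Ideal.span {(qmk (X ^ e) : PolyQuot k (e * p))} •
          (⊤ : Submodule (PolyQuot k (e * p)) ↥Fil))),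
        (qmk g : PolyQuot k e) • q = (qmk g : PolyQuot k (e * p)) • q)
    [Algebra (PolyQuot k e) (PolyQuot k (e * p))]
    (halg : ∀ g : Polynomial k,
      algebraMap (PolyQuot k e) (PolyQuot k (e * p)) (qmk g) = qmk (g ^ p)) :
    Nonempty (Module.Basis (Fin n) (PolyQuot k e)
        (↥Fil ⧸ (Ideal.span {(qmk (X ^ e) : PolyQuot k (e * p))} •
          (⊤ : Submodule (PolyQuot k (e * p)) ↥Fil)))) ∧
    ∃ Φ : (TensorProduct (PolyQuot k e) (PolyQuot k (e * p))
        (↥Fil ⧸ (Ideal.span {(qmk (X ^ e) : PolyQuot k (e * p))} •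
          (⊤ : Submodule (PolyQuot k (e * p)) ↥Fil)))) →ₗ[PolyQuot k (e * p)] M,
      (∀ (s : PolyQuot k (e * p)) (x : ↥Fil),
        Φ (s ⊗ₜ[PolyQuot k e] (Submodule.Quotient.mk x)) = s • φr x) ∧
      Function.Bijective Φ := by
  obtain ⟨s, hs⟩ : ∃ s, p = r + 1 + s := ⟨p - (r + 1), by have := hp.two_le; omega⟩
  have hep : e * p = e + (e * r + e * s) := by rw [hs]; ring
  have hd : ∀ m : M, (qmk (X ^ (e * r + e * s)) : PolyQuot k (e * p)) • m ∈ Fil := fun m => by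
    rw [pow_add, map_mul, mul_comm (qmk _), mul_smul]
    exact Fil.smul_mem _ (hur m)
  have hJ : Ideal.span {(X : k[X]) ^ (e * p)} ≤ Ideal.span {X ^ e * X ^ (e * r + e * s)} := by
    rw [← pow_add, ← hep]
  obtain ⟨bQ⟩ := Fil.nonempty_basis_quotient_smul_top (J := Ideal.span {X ^ (e * p)})
    (a := X ^ e) bM (pow_ne_zero _ X_ne_zero) hJ hd hTQ
  let N : Submodule (PolyQuot k (e * p)) Fil :=
    Ideal.span {(qmk (X ^ e) : PolyQuot k (e * p))} • ⊤
  have hu : (qmk (X ^ e) : PolyQuot k (e * p)) ^ p = 0 := by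
    rw [← map_pow, ← pow_mul, Ideal.Quotient.eq_zero_iff_mem]
    exact Ideal.mem_span_singleton_self _
  let f : Fil ⧸ N →+ M := QuotientAddGroup.lift N.toAddSubgroup φr
    (φr.toAddSubgroup_smul_top_le_ker_of_pow_eq_zero hsemi hu)
  have hf : ∀ t q, f (t • q) = algebraMap (PolyQuot k e) (PolyQuot k (e * p)) t • f q := by
    intro t q
    obtain ⟨g, rfl⟩ := Ideal.Quotient.mk_surjective t
    obtain ⟨x, rfl⟩ := Submodule.Quotient.mk_surjective _ q
    rw [hTQ, ← Submodule.Quotient.mk_smul]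
    exact (hsemi _ x).trans (by rw [halg, map_pow]; rfl)
  obtain ⟨Φ, hΦ, hbij⟩ := exists_bijective_baseChange_lift bQ bM f hf
    (by rwa [← (Submodule.Quotient.mk_surjective _).range_comp f])
  exact ⟨⟨bQ⟩, Φ, fun s x => hΦ s _, hbij⟩

/-- Lemma A.2.2. For a Breuil-module datum `(M, Fil, φ_r)` over
`S̄ = k[u]/(u^{ep})` with `M` free of rank `n`, `u^{er}M ⊆ Fil`, `φ_r` additive and
Frobenius-semilinear (`φ_r(s·x) = s^p·φ_r(x)`) with image generating `M`:
(a) `Fil/u^e·Fil` is free of rank `n` over `T = k[u]/(u^e)`; and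
(b) the `S̄`-linear map `S̄ ⊗_{ψ,T} (Fil/u^e Fil) → M`, `s ⊗ x̄ ↦ s·φ_r(x)`, is an
isomorphism, where the `T`-algebra structure `ψ : T → S̄` is `x ↦ x^p`. -/
theorem stmt_10 (p : ℕ) (hp : p.Prime) {k : Type*} [Field k] [CharP k p]
    (e r n : ℕ) (he : 1 ≤ e) (hr : r ≤ p - 2)
    {M : Type*} [AddCommGroup M] [Module (PolyQuot k (e * p)) M]
    (bM : Module.Basis (Fin n) (PolyQuot k (e * p)) M)
    (Fil : Submodule (PolyQuot k (e * p)) M)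
    (hur : ∀ x : M, (qmk (X ^ (e * r)) : PolyQuot k (e * p)) • x ∈ Fil)
    (φr : ↥Fil →+ M)
    (hsemi : ∀ (s : PolyQuot k (e * p)) (x : ↥Fil), φr (s • x) = s ^ p • φr x)
    (hgen : Submodule.span (PolyQuot k (e * p)) (Set.range ⇑φr) = ⊤)
    [Module (PolyQuot k e)
      (↥Fil ⧸ (Ideal.span {(qmk (X ^ e) : PolyQuot k (e * p))} •
        (⊤ : Submodule (PolyQuot k (e * p)) ↥Fil)))]
    (hTQ : ∀ (g : Polynomial k)
        (q : ↥Fil ⧸ (Ideal.span {(qmk (X ^ e) : PolyQuot k (e * p))} •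
          (⊤ : Submodule (PolyQuot k (e * p)) ↥Fil))),
        (qmk g : PolyQuot k e) • q = (qmk g : PolyQuot k (e * p)) • q)
    [Algebra (PolyQuot k e) (PolyQuot k (e * p))]
    (halg : ∀ g : Polynomial k,
      algebraMap (PolyQuot k e) (PolyQuot k (e * p)) (qmk g) = qmk (g ^ p)) :
    Nonempty (Module.Basis (Fin n) (PolyQuot k e)
        (↥Fil ⧸ (Ideal.span {(qmk (X ^ e) : PolyQuot k (e * p))} •
          (⊤ : Submodule (PolyQuot k (e * p)) ↥Fil)))) ∧
    ∃ Φ : (TensorProduct (PolyQuot k e) (PolyQuot k (e * p))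
        (↥Fil ⧸ (Ideal.span {(qmk (X ^ e) : PolyQuot k (e * p))} •
          (⊤ : Submodule (PolyQuot k (e * p)) ↥Fil)))) →ₗ[PolyQuot k (e * p)] M,
      (∀ (s : PolyQuot k (e * p)) (x : ↥Fil),
        Φ (s ⊗ₜ[PolyQuot k e] (Submodule.Quotient.mk x)) = s • φr x) ∧
      Function.Bijective Φ :=
  stmt_10_general p hp e r n hr bM Fil hur φr hsemi hgen hTQ halg
end

section
/- Let O and O′ be discrete valuation rings and let O → O′ be an injective local ring homomorphism (so m_O maps into m_{O′}) making O′ a finite free O-module. Let A be a commutative local O-algebra such that the structure map O → A induces an isomorphism O/m_O ≅ A/m_A on residue fields. Let M be a finite free O-module equipped with an A-module structure by O-linear endomorphisms such that the induced map A → End_O(M) is injective (A acts faithfully on M). If M ⊗_O O′ is free as an (A ⊗_O O′)-module, then M is free as an A-module. -/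
/-!
Freeness descends along the faithfully flat extension `A → A ⊗_O O'`. The compatibility of
the two actions identifies `M ⊗_O O'` with the base change `(A ⊗_O O') ⊗_A M`, which is
therefore free, hence flat, over `A ⊗_O O'`. As `O'` is free and nonzero over `O`, the ring
`A ⊗_O O'` is faithfully flat over `A`, so `M` is flat over `A`; and a finite flat module over
a local ring is free.
-/

open TensorProduct

namespace TensorProduct

variable {R A S M : Type*} [CommRing R] [CommRing A] [Algebra R A] [CommRing S] [Algebra R S]
  [AddCommGroup M] [Module R M] [Module A M] [IsScalarTower R A M]
  [Module (A ⊗[R] S) (M ⊗[R] S)]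

def baseChangeEquivOfSMulTmul
    (h : ∀ (a : A) (s t : S) (m : M), (a ⊗ₜ[R] s) • (m ⊗ₜ[R] t) = (a • m) ⊗ₜ[R] (s * t)) :
    (A ⊗[R] S) ⊗[A] M ≃ₗ[A ⊗[R] S] M ⊗[R] S :=
  let e := TensorProduct.comm A (A ⊗[R] S) M ≪≫ₗ AlgebraTensorModule.cancelBaseChange R A A M S
  { e with
    map_smul' := fun c x => by
      change e (c • x) = c • e x
      induction c with
      | zero => rw [zero_smul, map_zero, zero_smul]
      | add c c' hc hc' => rw [add_smul, map_add, hc, hc', add_smul]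
      | tmul a s =>
        induction x with
        | zero => rw [smul_zero, map_zero, smul_zero]
        | add x x' hx hx' => rw [smul_add, map_add, hx, hx', map_add, smul_add]
        | tmul b m =>
          induction b with
          | zero => rw [zero_tmul, smul_zero, map_zero, smul_zero]
          | add b b' hb hb' => rw [add_tmul, smul_add, map_add, hb, hb', map_add, smul_add]
          | tmul a' s' =>
            rw [smul_tmul', smul_eq_mul, Algebra.TensorProduct.tmul_mul_tmul]
            simp only [e, LinearEquiv.trans_apply, comm_tmul,
              AlgebraTensorModule.cancelBaseChange_tmul, mul_smul, h] }

end TensorProduct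

theorem Module.free_of_free_baseChange_of_isLocalRing {A M : Type*} [CommRing A] [IsLocalRing A]
    [AddCommGroup M] [Module A M] [Module.Finite A M]
    (B : Type*) [CommRing B] [Algebra A B] [Module.FaithfullyFlat A B]
    [Module.Free B (B ⊗[A] M)] : Module.Free A M :=
  have : Module.Flat A M := .of_flat_tensorProduct A M B
  free_of_flat_of_isLocalRing

theorem stmt_11_general {O O' A M : Type*}
    [CommRing O]
    [CommRing O'] [IsDomain O']
    [Algebra O O']
    [Module.Free O O']
    [CommRing A] [Algebra O A] [IsLocalRing A]
    [AddCommGroup M] [Module O M] [Module.Finite O M]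
    [Module A M] [IsScalarTower O A M]
    [Module (TensorProduct O A O') (TensorProduct O M O')]
    (hcompat : ∀ (a : A) (s t : O') (m : M),
      (a ⊗ₜ[O] s : TensorProduct O A O') • (m ⊗ₜ[O] t : TensorProduct O M O')
        = (a • m) ⊗ₜ[O] (s * t))
    (hfree : Module.Free (TensorProduct O A O') (TensorProduct O M O')) :
    Module.Free A M := by
  have : Module.Finite A M := .of_restrictScalars_finite O A M
  have : Module.Free (A ⊗[O] O') ((A ⊗[O] O') ⊗[A] M) :=
    .of_equiv (baseChangeEquivOfSMulTmul hcompat).symm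
  exact Module.free_of_free_baseChange_of_isLocalRing (A ⊗[O] O')

/-- Lemma 5.1.2. Let `O → O′` be an injective local homomorphism of
discrete valuation rings making `O′` finite free over `O`, and let `A` be a commutative
local `O`-algebra whose structure map induces an isomorphism on residue fields.  If `A`
acts faithfully by `O`-linear endomorphisms on a finite free `O`-module `M`, and
`M ⊗_O O′` is free over `A ⊗_O O′`, then `M` is free over `A`. -/
theorem stmt_11 {O O' A M : Type*}
    [CommRing O] [IsDomain O] [IsDiscreteValuationRing O]
    [CommRing O'] [IsDomain O'] [IsDiscreteValuationRing O']
    [Algebra O O'] (hinj : Function.Injective (algebraMap O O'))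
    [IsLocalHom (algebraMap O O')]
    [Module.Finite O O'] [Module.Free O O']
    [CommRing A] [Algebra O A] [IsLocalRing A]
    (hsurj : Function.Surjective ((IsLocalRing.residue A).comp (algebraMap O A)))
    (hker : RingHom.ker ((IsLocalRing.residue A).comp (algebraMap O A))
      = IsLocalRing.maximalIdeal O)
    [AddCommGroup M] [Module O M] [Module.Finite O M] [Module.Free O M]
    [Module A M] [IsScalarTower O A M] [SMulCommClass O A M]
    (hfaith : ∀ a : A, (∀ m : M, a • m = 0) → a = 0)
    [Module (TensorProduct O A O') (TensorProduct O M O')]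
    (hcompat : ∀ (a : A) (s t : O') (m : M),
      (a ⊗ₜ[O] s : TensorProduct O A O') • (m ⊗ₜ[O] t : TensorProduct O M O')
        = (a • m) ⊗ₜ[O] (s * t))
    (hfree : Module.Free (TensorProduct O A O') (TensorProduct O M O')) :
    Module.Free A M :=
  stmt_11_general hcompat hfree
end

section
/- Let p be a prime and let k, m be integers with 1 ≤ k ≤ p − 2 and 0 ≤ m ≤ p − 1. Then in F_p = ℤ/pℤ one has Σ_{z ∈ F_p, z ≠ 0} (z + 1)^{m} · z^{p−1−k} = −binom(m, k), where binom(m, k) denotes the binomial coefficient reduced modulo p (equal to 0 when k > m). -/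
/-! Expanding `(z + 1)^m` binomially turns the sum into `∑ᵢ C(m, i) ∑_z z^(i + p - 1 - k)`,
and a power sum over `𝔽_pˣ` is `-1` when `p - 1` divides the exponent and `0` otherwise.
For `i ≤ m ≤ p - 1` and `1 ≤ k ≤ p - 2` the exponent lies strictly between `0` and
`2 (p - 1)`, so only `i = k` survives. -/

open Finset

theorem sum_filter_ne_zero_eq_sum_units {G M : Type*} [GroupWithZero G] [Fintype G]
    [DecidableEq G] [AddCommMonoid M] (f : G → M) :
    ∑ z ∈ univ.filter (fun z : G => z ≠ 0), f z = ∑ u : Gˣ, f u := by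
  rw [sum_subtype _ (fun z => by rw [mem_filter, and_iff_right (mem_univ z)]) f]
  exact Fintype.sum_equiv (unitsEquivNeZero (G₀ := G)).symm _ _ fun _ => rfl

theorem Nat.sub_one_dvd_add_sub_iff {n i k : ℕ} (hi : i ≤ n - 1) (hk1 : 1 ≤ k)
    (hk2 : k ≤ n - 2) : n - 1 ∣ i + (n - 1 - k) ↔ i = k := by
  refine ⟨fun hdvd => ?_, fun hik => hik ▸ ⟨1, by omega⟩⟩
  have := Nat.eq_of_dvd_of_lt_two_mul (by omega) hdvd (by omega)
  omega

namespace FiniteField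

theorem sum_units_add_one_pow_mul_pow {K : Type*} [Field K] [Fintype K] [DecidableEq K]
    {k m : ℕ} (hk1 : 1 ≤ k) (hk2 : k ≤ Fintype.card K - 2) (hm : m ≤ Fintype.card K - 1) :
    ∑ u : Kˣ, ((u : K) + 1) ^ m * (u : K) ^ (Fintype.card K - 1 - k) = -(m.choose k : K) := by
  have hexpand : ∀ z : K, (z + 1) ^ m * z ^ (Fintype.card K - 1 - k)
        = ∑ i ∈ range (m + 1), (m.choose i : K) * z ^ (i + (Fintype.card K - 1 - k)) := by
    intro z
    rw [add_pow, sum_mul]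
    refine sum_congr rfl fun i _ => ?_
    rw [pow_add]
    ring
  have hinner : ∀ i ∈ range (m + 1),
      ∑ u : Kˣ, (m.choose i : K) * (u : K) ^ (i + (Fintype.card K - 1 - k))
        = if i = k then -(m.choose k : K) else 0 := fun i hi => by
    have hdvd := Nat.sub_one_dvd_add_sub_iff (n := Fintype.card K) (i := i)
      (by rw [mem_range] at hi; omega) hk1 hk2
    rw [← mul_sum, sum_pow_units]
    simp only [hdvd]
    split_ifs with hik
    · rw [hik, mul_neg_one]
    · rw [mul_zero]
  simp only [hexpand]
  rw [sum_comm, sum_congr rfl hinner, sum_ite_eq']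
  split_ifs with hkm
  · rfl
  · rw [Nat.choose_eq_zero_of_lt (by rw [mem_range] at hkm; omega), Nat.cast_zero, neg_zero]

end FiniteField

/-- For a prime `p`, `1 ≤ k ≤ p − 2` and `0 ≤ m ≤ p − 1`, in `𝔽_p` one has
`Σ_{z ≠ 0} (z + 1)^m z^{p−1−k} = −C(m, k)` (binomial coefficient mod `p`). -/
theorem stmt_12 (p : ℕ) [Fact p.Prime] (k m : ℕ)
    (hk1 : 1 ≤ k) (hk2 : k ≤ p - 2) (hm : m ≤ p - 1) :
    ∑ z ∈ Finset.univ.filter (fun z : ZMod p => z ≠ 0), (z + 1) ^ m * z ^ (p - 1 - k)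
      = -(Nat.choose m k : ZMod p) := by
  have h := FiniteField.sum_units_add_one_pow_mul_pow (K := ZMod p) (k := k) (m := m)
  rw [ZMod.card] at h
  rw [sum_filter_ne_zero_eq_sum_units]
  exact h hk1 hk2 hm
end

section
/- Let p be a prime and let F be a field of characteristic p. Let a₀, a₁, a₂ be integers with a₁ − a₀ > 2, a₂ − a₁ > 2, and a₂ − a₀ < p − 3. Let G := GL₃(F_p), let B ⊆ G be the subgroup of upper-triangular invertible matrices, set ṡ₁ := [[0,1,0],[1,0,0],[0,0,1]], ẇ₀ := [[0,0,1],[0,1,0],[1,0,0]], u(x,y,z) := [[1,x,y],[0,1,z],[0,0,1]] for x,y,z ∈ F_p, and g₀ := [[0,0,1],[0,1,−1],[1,−1,0]]. Let f : G → F be a function satisfying: (i) f(g) = 0 unless g ∈ B·ṡ₁·B; (ii) f(ṡ₁·u) = f(ṡ₁) for every upper-triangular unipotent u ∈ G; (iii) f(b·g) = b₁₁^{a₂}·b₂₂^{a₁}·b₃₃^{a₀}·f(g) for all b ∈ B and g ∈ G (integer powers of the units bᵢᵢ ∈ F_pˣ, viewed in F). Then Σ_{x,y,z ∈ F_p} x^{p−(a₂−a₀)}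 · z^{p−(a₁−a₀)} · f(g₀ · u(x,y,z) · ẇ₀) = (−1)^{a₂−1} · binom(p−(a₁−a₀), a₂−a₁) · f(ṡ₁) in F. In particular, since 0 < a₂ − a₁ ≤ p − (a₁ − a₀) ≤ p − 1, the binomial coefficient is nonzero in F, so the left-hand side is nonzero whenever f(ṡ₁) ≠ 0. -/
/-!
Write `d₁ = a₁ - a₀` and `d₂ = a₂ - a₁`. The matrix `g₀ u(x,y,z) ẇ₀` is lower unitriangular with
entries `z - 1`, `x - 1` below the diagonal and `y - z` in the corner. Any product `b ṡ₁ b'` with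
`b, b'` upper triangular has zeros below the diagonal in row 2, and its `(1,0)` entry is
`b₁₁ b'₀₀`, a unit. So only the terms with `x = 1`, `y = z ≠ 1` survive. For those terms, with `α = z - 1`, the
matrix factors as `[[-α⁻¹,1,0],[0,α,0],[0,0,1]] · ṡ₁ · u(α⁻¹,0,0)`, and it contributes
`(-1)^a₂ z^(p-d₁) (z-1)^(p-1-d₂) f(ṡ₁)`. Put `z = t + 1` and expand `(t+1)^(p-d₁)`. Since
`∑ₜ t^k` over `𝔽_p` is `-1` when `0 < k` and `p - 1 ∣ k`, and `0` otherwise, only the term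
`t^(p-1)` survives, and it gives `-C(p-d₁, d₂)`.
-/

open Matrix Finset

section Triangular

variable {R : Type*} [CommRing R]

theorem GeneralLinearGroup.isUnit_apply_self_of_isUpperTriangular {n : Type*} [Fintype n]
    [LinearOrder n] (b : GL n R) (hb : (b : Matrix n n R).IsUpperTriangular) (i : n) :
    IsUnit ((b : Matrix n n R) i i) := by
  have hdet := (Matrix.isUnit_iff_isUnit_det _).mp b.isUnit
  rw [det_of_isUpperTriangular hb, IsUnit.prod_univ_iff] at hdet
  exact hdet i

theorem mul_swap_mul_apply_of_isUpperTriangular {B₁ B₂ : Matrix (Fin 3) (Fin 3) R}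
    (h₁ : B₁.IsUpperTriangular) (h₂ : B₂.IsUpperTriangular) :
    (B₁ * !![0, 1, 0; 1, 0, 0; 0, 0, 1] * B₂ : Matrix (Fin 3) (Fin 3) R) 2 0 = 0 ∧
      (B₁ * !![0, 1, 0; 1, 0, 0; 0, 0, 1] * B₂ : Matrix (Fin 3) (Fin 3) R) 2 1 = 0 ∧
      (B₁ * !![0, 1, 0; 1, 0, 0; 0, 0, 1] * B₂ : Matrix (Fin 3) (Fin 3) R) 1 0 =
        B₁ 1 1 * B₂ 0 0 := by
  have h₁10 : B₁ 1 0 = 0 := h₁ (by decide)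
  have h₁20 : B₁ 2 0 = 0 := h₁ (by decide)
  have h₁21 : B₁ 2 1 = 0 := h₁ (by decide)
  have h₂10 : B₂ 1 0 = 0 := h₂ (by decide)
  have h₂20 : B₂ 2 0 = 0 := h₂ (by decide)
  have h₂21 : B₂ 2 1 = 0 := h₂ (by decide)
  simp [mul_apply, Fin.sum_univ_succ, h₁10, h₁20, h₁21, h₂10, h₂20, h₂21]

theorem entries_of_lowerUnipotent_eq_mul_swap_mul {B₁ B₂ : GL (Fin 3) R} {a b c : R}
    (h₁ : (B₁ : Matrix (Fin 3) (Fin 3) R).IsUpperTriangular)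
    (h₂ : (B₂ : Matrix (Fin 3) (Fin 3) R).IsUpperTriangular)
    (h : !![1, 0, 0; a, 1, 0; b, c, 1] =
      (B₁ : Matrix (Fin 3) (Fin 3) R) * !![0, 1, 0; 1, 0, 0; 0, 0, 1] *
        (B₂ : Matrix (Fin 3) (Fin 3) R)) :
    b = 0 ∧ c = 0 ∧ IsUnit a := by
  obtain ⟨h20, h21, h10⟩ := mul_swap_mul_apply_of_isUpperTriangular h₁ h₂
  rw [← h] at h20 h21 h10
  simp only [of_apply, cons_val', cons_val_zero, cons_val_one, cons_val_two, empty_val',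
    cons_val_fin_one, Nat.succ_eq_add_one, Nat.reduceAdd, tail_cons] at h20 h21 h10
  refine ⟨h20, h21, h10 ▸ ?_⟩
  exact (GeneralLinearGroup.isUnit_apply_self_of_isUpperTriangular B₁ h₁ 1).mul
    (GeneralLinearGroup.isUnit_apply_self_of_isUpperTriangular B₂ h₂ 0)

theorem conj_upperUnipotent_eq (x y z : R) :
    !![0, 0, 1; 0, 1, -1; 1, -1, 0] * !![1, x, y; 0, 1, z; 0, 0, 1] *
      !![0, 0, 1; 0, 1, 0; 1, 0, 0] = !![1, 0, 0; z - 1, 1, 0; y - z, x - 1, 1] := by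
  ext i j
  fin_cases i <;> fin_cases j <;> simp [mul_apply, Fin.sum_univ_succ] <;> ring

end Triangular

theorem lowerUnipotent_eq_mul_swap_mul {K : Type*} [Field K] {α : K} (hα : α ≠ 0) :
    !![1, 0, 0; α, 1, 0; 0, 0, 1] =
      !![-α⁻¹, 1, 0; 0, α, 0; 0, 0, 1] * !![0, 1, 0; 1, 0, 0; 0, 0, 1] *
        !![1, α⁻¹, 0; 0, 1, 0; 0, 0, 1] := by
  ext i j
  fin_cases i <;> fin_cases j <;> simp [mul_apply, Fin.sum_univ_succ, hα]

namespace FiniteField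

variable {K : Type*} [Field K] [Fintype K]

theorem sum_pow_of_ne_zero [DecidableEq K] {i : ℕ} (hi : i ≠ 0) :
    ∑ x : K, x ^ i = if Fintype.card K - 1 ∣ i then -1 else 0 := by
  rw [Fintype.sum_eq_add_sum_subtype_ne _ 0, zero_pow hi, zero_add, ← sum_pow_units K i]
  exact unitsEquivNeZero.sum_comp (fun x : {a : K // a ≠ 0} => x.1 ^ i) |>.symm

theorem sum_pow_mul_sub_one_pow {m n : ℕ} (hn : n ≠ 0) (hnq : n ≤ Fintype.card K - 1)
    (hmn : m + n < 2 * (Fintype.card K - 1)) :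
    ∑ x : K, x ^ m * (x - 1) ^ n = -(m.choose (Fintype.card K - 1 - n) : K) := by
  classical
  set q := Fintype.card K
  have hunique : ∀ i ≤ m, q - 1 ∣ i + n → i = q - 1 - n := fun i hi hdvd => by
    have := Nat.eq_of_dvd_of_lt_two_mul (by omega) hdvd (by omega)
    omega
  calc ∑ x : K, x ^ m * (x - 1) ^ n
      = ∑ t : K, (t + 1) ^ m * t ^ n :=
        (Fintype.sum_equiv (Equiv.addRight 1) _ _ fun t => by simp).symm
    _ = ∑ i ∈ range (m + 1), (m.choose i : K) * ∑ t : K, t ^ (i + n) := by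
        simp_rw [add_pow, one_pow, mul_one, sum_mul, mul_sum]
        rw [sum_comm]
        exact sum_congr rfl fun i _ => sum_congr rfl fun t _ => by ring
    _ = ∑ i ∈ range (m + 1), (m.choose i : K) * if q - 1 ∣ i + n then -1 else 0 :=
        sum_congr rfl fun i _ => by rw [sum_pow_of_ne_zero (by omega)]
    _ = -(m.choose (q - 1 - n) : K) := by
        rw [sum_eq_single (q - 1 - n)]
        · rw [if_pos ⟨1, by omega⟩]; ring
        · intro i hi hne
          rw [if_neg fun hdvd => hne (hunique i (by simpa [Nat.lt_succ_iff] using hi) hdvd),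
            mul_zero]
        · intro h
          rw [Nat.choose_eq_zero_of_lt (by simp at h; omega)]
          simp

theorem zpow_neg_natCast_eq_pow (a : K) {d : ℕ} (hd₀ : d ≠ 0) (hd : d < Fintype.card K - 1) :
    a ^ (-(d : ℤ)) = a ^ (Fintype.card K - 1 - d) := by
  rcases eq_or_ne a 0 with rfl | ha
  · rw [_root_.zero_zpow _ (by omega), zero_pow (by omega)]
  rw [_root_.zpow_neg, zpow_natCast, inv_eq_of_mul_eq_one_left]
  rw [← pow_add, Nat.sub_add_cancel hd.le, pow_card_sub_one_eq_one a ha]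

end FiniteField

theorem neg_inv_zpow_mul_zpow {K : Type*} [Field K] {α : K} (hα : α ≠ 0) (m n : ℤ) :
    (-α⁻¹) ^ m * α ^ n = (-1) ^ m * α ^ (n - m) := by
  rw [neg_eq_neg_one_mul, mul_zpow, _root_.inv_zpow', mul_assoc, ← zpow_add₀ hα, neg_add_eq_sub]

section Eigenfunction

variable {K F : Type*} [Field K] [Semiring F] {f : GL (Fin 3) K → F} {s₁ : GL (Fin 3) K}

theorem apply_eq_zero_of_not_mem_cell
    (hs₁ : (s₁ : Matrix (Fin 3) (Fin 3) K) = !![0, 1, 0; 1, 0, 0; 0, 0, 1])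
    (hsupp : ∀ g : GL (Fin 3) K,
      (¬ ∃ b₁ b₂ : GL (Fin 3) K, (b₁ : Matrix (Fin 3) (Fin 3) K).IsUpperTriangular ∧
        (b₂ : Matrix (Fin 3) (Fin 3) K).IsUpperTriangular ∧ g = b₁ * s₁ * b₂) → f g = 0)
    {g : GL (Fin 3) K} {a b c : K}
    (hg : (g : Matrix (Fin 3) (Fin 3) K) = !![1, 0, 0; a, 1, 0; b, c, 1])
    (habc : ¬(b = 0 ∧ c = 0 ∧ a ≠ 0)) : f g = 0 := by
  refine hsupp g fun ⟨b₁, b₂, h₁, h₂, hg'⟩ => habc ?_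
  obtain ⟨hb, hc, ha⟩ := entries_of_lowerUnipotent_eq_mul_swap_mul h₁ h₂
    (by rw [← hs₁, ← hg, hg', Units.val_mul, Units.val_mul])
  exact ⟨hb, hc, ha.ne_zero⟩

theorem apply_lowerUnipotent (φ : K →+* F) (a₀ a₁ a₂ : ℤ)
    (hs₁ : (s₁ : Matrix (Fin 3) (Fin 3) K) = !![0, 1, 0; 1, 0, 0; 0, 0, 1])
    {u : K → K → K → GL (Fin 3) K}
    (hu : ∀ x y z : K, (u x y z : Matrix (Fin 3) (Fin 3) K) = !![1, x, y; 0, 1, z; 0, 0, 1])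
    (hinv : ∀ x y z : K, f (s₁ * u x y z) = f s₁)
    (hequiv : ∀ b g : GL (Fin 3) K, (b : Matrix (Fin 3) (Fin 3) K).IsUpperTriangular →
      f (b * g) = φ ((b : Matrix (Fin 3) (Fin 3) K) 0 0 ^ a₂ *
        (b : Matrix (Fin 3) (Fin 3) K) 1 1 ^ a₁ * (b : Matrix (Fin 3) (Fin 3) K) 2 2 ^ a₀) * f g)
    {g : GL (Fin 3) K} {α : K} (hα : α ≠ 0)
    (hg : (g : Matrix (Fin 3) (Fin 3) K) = !![1, 0, 0; α, 1, 0; 0, 0, 1]) :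
    f g = φ ((-α⁻¹) ^ a₂ * α ^ a₁) * f s₁ := by
  set b := g * (s₁ * u α⁻¹ 0 0)⁻¹
  have hb : (b : Matrix (Fin 3) (Fin 3) K) = !![-α⁻¹, 1, 0; 0, α, 0; 0, 0, 1] := by
    rw [Units.val_mul, Units.mul_inv_eq_iff_eq_mul, Units.val_mul, hs₁, hu, hg, ← mul_assoc,
      lowerUnipotent_eq_mul_swap_mul hα]
  have hb_upper : (b : Matrix (Fin 3) (Fin 3) K).IsUpperTriangular := by
    intro i j hij
    rw [hb]
    fin_cases i <;> fin_cases j <;> first | exact absurd hij (by decide) | rfl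
  rw [← inv_mul_cancel_right g (s₁ * u α⁻¹ 0 0), hequiv b _ hb_upper, hinv, hb]
  simp

theorem apply_conj_upperUnipotent [DecidableEq K] (φ : K →+* F) (a₀ a₁ a₂ : ℤ) (ha : a₁ ≠ a₂)
    {w₀ g₀ : GL (Fin 3) K}
    (hs₁ : (s₁ : Matrix (Fin 3) (Fin 3) K) = !![0, 1, 0; 1, 0, 0; 0, 0, 1])
    (hw₀ : (w₀ : Matrix (Fin 3) (Fin 3) K) = !![0, 0, 1; 0, 1, 0; 1, 0, 0])
    (hg₀ : (g₀ : Matrix (Fin 3) (Fin 3) K) = !![0, 0, 1; 0, 1, -1; 1, -1, 0])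
    {u : K → K → K → GL (Fin 3) K}
    (hu : ∀ x y z : K, (u x y z : Matrix (Fin 3) (Fin 3) K) = !![1, x, y; 0, 1, z; 0, 0, 1])
    (hsupp : ∀ g : GL (Fin 3) K,
      (¬ ∃ b₁ b₂ : GL (Fin 3) K, (b₁ : Matrix (Fin 3) (Fin 3) K).IsUpperTriangular ∧
        (b₂ : Matrix (Fin 3) (Fin 3) K).IsUpperTriangular ∧ g = b₁ * s₁ * b₂) → f g = 0)
    (hinv : ∀ x y z : K, f (s₁ * u x y z) = f s₁)
    (hequiv : ∀ b g : GL (Fin 3) K, (b : Matrix (Fin 3) (Fin 3) K).IsUpperTriangular →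
      f (b * g) = φ ((b : Matrix (Fin 3) (Fin 3) K) 0 0 ^ a₂ *
        (b : Matrix (Fin 3) (Fin 3) K) 1 1 ^ a₁ * (b : Matrix (Fin 3) (Fin 3) K) 2 2 ^ a₀) * f g)
    (x y z : K) :
    f (g₀ * u x y z * w₀) =
      if x = 1 ∧ y = z then φ ((-1) ^ a₂ * (z - 1) ^ (a₁ - a₂)) * f s₁ else 0 := by
  have hg : ((g₀ * u x y z * w₀ : GL (Fin 3) K) : Matrix (Fin 3) (Fin 3) K) =
      !![1, 0, 0; z - 1, 1, 0; y - z, x - 1, 1] := by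
    rw [Units.val_mul, Units.val_mul, hg₀, hu, hw₀, conj_upperUnipotent_eq]
  split_ifs with hxy
  · obtain ⟨rfl, rfl⟩ := hxy
    rw [sub_self, sub_self] at hg
    by_cases hy : y = 1
    · rw [apply_eq_zero_of_not_mem_cell hs₁ hsupp hg (by simp [hy]), hy, sub_self,
        _root_.zero_zpow _ (sub_ne_zero.2 ha), mul_zero, map_zero, zero_mul]
    · rw [apply_lowerUnipotent φ a₀ a₁ a₂ hs₁ hu hinv hequiv (sub_ne_zero.2 hy) hg,
        neg_inv_zpow_mul_zpow (sub_ne_zero.2 hy)]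
  · exact apply_eq_zero_of_not_mem_cell hs₁ hsupp hg (by grind)

end Eigenfunction

/-- the computation proving Lemma 3.1.7. Let `f : GL₃(𝔽_p) → F` be an
Iwahori eigenfunction of eigencharacter `(a₂, a₁, a₀)` supported on the Bruhat cell
`B·ṡ₁·B` and right-invariant under the upper unipotent subgroup at `ṡ₁`.  Then the value
at `g₀` of `S·f`, for the group-algebra operator
`S = Σ_{x,y,z} x^{p−(a₂−a₀)} z^{p−(a₁−a₀)} u(x,y,z) ẇ₀`, equals
`(−1)^{a₂−1}·C(p−(a₁−a₀), a₂−a₁)·f(ṡ₁)`; in particular it is nonzero if `f(ṡ₁) ≠ 0`. -/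
theorem stmt_13 (p : ℕ) [Fact p.Prime] {F : Type*} [Field F] [CharP F p]
    (a₀ a₁ a₂ : ℤ) (h10 : 2 < a₁ - a₀) (h21 : 2 < a₂ - a₁) (h20 : a₂ - a₀ < (p : ℤ) - 3)
    (s₁ w₀ g₀ : GL (Fin 3) (ZMod p))
    (hs₁ : (s₁ : Matrix (Fin 3) (Fin 3) (ZMod p)) = !![0, 1, 0; 1, 0, 0; 0, 0, 1])
    (hw₀ : (w₀ : Matrix (Fin 3) (Fin 3) (ZMod p)) = !![0, 0, 1; 0, 1, 0; 1, 0, 0])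
    (hg₀ : (g₀ : Matrix (Fin 3) (Fin 3) (ZMod p)) = !![0, 0, 1; 0, 1, -1; 1, -1, 0])
    (u : ZMod p → ZMod p → ZMod p → GL (Fin 3) (ZMod p))
    (hu : ∀ x y z : ZMod p,
      (u x y z : Matrix (Fin 3) (Fin 3) (ZMod p)) = !![1, x, y; 0, 1, z; 0, 0, 1])
    (f : GL (Fin 3) (ZMod p) → F)
    (hsupp : ∀ g : GL (Fin 3) (ZMod p),
      (¬ ∃ b₁ b₂ : GL (Fin 3) (ZMod p),
        (∀ i j : Fin 3, j < i → (b₁ : Matrix (Fin 3) (Fin 3) (ZMod p)) i j = 0) ∧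
        (∀ i j : Fin 3, j < i → (b₂ : Matrix (Fin 3) (Fin 3) (ZMod p)) i j = 0) ∧
        g = b₁ * s₁ * b₂) → f g = 0)
    (hinv : ∀ x y z : ZMod p, f (s₁ * u x y z) = f s₁)
    (hequiv : ∀ b g : GL (Fin 3) (ZMod p),
      (∀ i j : Fin 3, j < i → (b : Matrix (Fin 3) (Fin 3) (ZMod p)) i j = 0) →
      f (b * g) = ZMod.castHom (dvd_refl p) F
          ((b : Matrix (Fin 3) (Fin 3) (ZMod p)) 0 0 ^ a₂ *
            (b : Matrix (Fin 3) (Fin 3) (ZMod p)) 1 1 ^ a₁ *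
            (b : Matrix (Fin 3) (Fin 3) (ZMod p)) 2 2 ^ a₀) * f g) :
    (∑ x : ZMod p, ∑ y : ZMod p, ∑ z : ZMod p,
        ZMod.castHom (dvd_refl p) F
            (x ^ ((p : ℤ) - (a₂ - a₀)) * z ^ ((p : ℤ) - (a₁ - a₀))) *
          f (g₀ * u x y z * w₀))
      = (-1 : F) ^ (a₂ - 1) *
          (Nat.choose ((p : ℤ) - (a₁ - a₀)).toNat (a₂ - a₁).toNat : F) * f s₁ ∧
    (f s₁ ≠ 0 →
      (∑ x : ZMod p, ∑ y : ZMod p, ∑ z : ZMod p,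
          ZMod.castHom (dvd_refl p) F
              (x ^ ((p : ℤ) - (a₂ - a₀)) * z ^ ((p : ℤ) - (a₁ - a₀))) *
            f (g₀ * u x y z * w₀)) ≠ 0) := by
  classical
  obtain ⟨d₁, hd₁⟩ : ∃ d : ℕ, (d : ℤ) = a₁ - a₀ := ⟨_, Int.toNat_of_nonneg (by omega)⟩
  obtain ⟨d₂, hd₂⟩ : ∃ d : ℕ, (d : ℤ) = a₂ - a₁ := ⟨_, Int.toNat_of_nonneg (by omega)⟩
  have hcard : Fintype.card (ZMod p) = p := ZMod.card p
  have hexp₁ : (p : ℤ) - (a₁ - a₀) = ((p - d₁ : ℕ) : ℤ) := by omega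
  have hexp₂ : ∀ z : ZMod p, (z - 1) ^ (a₁ - a₂) = (z - 1) ^ (p - 1 - d₂) := fun z => by
    rw [show a₁ - a₂ = -(d₂ : ℤ) by omega, FiniteField.zpow_neg_natCast_eq_pow _ (by omega)
      (by omega), hcard]
  have hsum : ∑ z : ZMod p, z ^ (p - d₁) * (z - 1) ^ (p - 1 - d₂) =
      -((p - d₁).choose d₂ : ZMod p) := by
    rw [FiniteField.sum_pow_mul_sub_one_pow (by omega) (by omega) (by omega), hcard,
      show p - 1 - (p - 1 - d₂) = d₂ by omega]
  have htotal : (∑ x : ZMod p, ∑ y : ZMod p, ∑ z : ZMod p,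
        ZMod.castHom (dvd_refl p) F (x ^ ((p : ℤ) - (a₂ - a₀)) * z ^ ((p : ℤ) - (a₁ - a₀))) *
          f (g₀ * u x y z * w₀)) =
      (-1 : F) ^ (a₂ - 1) * ((p - d₁).choose d₂ : F) * f s₁ := by
    simp only [apply_conj_upperUnipotent _ a₀ a₁ a₂ (by omega) hs₁ hw₀ hg₀ hu hsupp hinv hequiv,
      mul_ite, mul_zero, ite_and, sum_ite_eq, sum_ite_eq', sum_ite_irrel, sum_const_zero,
      mem_univ, if_true, _root_.one_zpow, one_mul, hexp₁, zpow_natCast, hexp₂, ← mul_assoc,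
      ← map_mul]
    simp_rw [mul_right_comm _ ((-1 : ZMod p) ^ a₂)]
    rw [← sum_mul, ← map_sum, ← sum_mul, hsum, map_mul, map_neg, map_natCast, map_zpow₀, map_neg,
      map_one, zpow_sub_one₀ (by norm_num)]
    ring
  have hchoose : ((p - d₁).choose d₂ : F) ≠ 0 := by
    rw [Ne, CharP.cast_eq_zero_iff F p]
    exact (Nat.Prime.coprime_iff_not_dvd Fact.out).mp
      (Nat.Prime.coprime_choose_of_lt Fact.out (by omega) (by omega))
  rw [show ((p : ℤ) - (a₁ - a₀)).toNat = p - d₁ by omega, show (a₂ - a₁).toNat = d₂ by omega]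
  exact ⟨htotal, fun hf =>
    htotal ▸ mul_ne_zero (mul_ne_zero (zpow_ne_zero _ (by norm_num)) hchoose) hf⟩
end
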